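/- arXiv:1504.00085 — 8 statements merged into one kernel-verified Lean document; each statement's English description precedes it below -/
import Mathlib

section
/- If there exist n equiangular lines in C^d (or R^d) with common angle α, i.e., unit vectors x_1,...,x_n spanning distinct lines with |⟨x_i,x_j⟩| = α for all i ≠ j, then α² ≥ (n−d)/((n−1)d). -/
/-!
Put the vectors as the columns of a `d × n` matrix `X`. The Gram matrix `Xᴴ X` and the frame
matrix `X Xᴴ` have the same trace `∑ ‖xᵢ‖² = n` and the same Frobenius norm, since
`tr ((Xᴴ X)²) = tr ((X Xᴴ)²)`. Cauchy–Schwarz on the diagonal of the `d × d` matrix `X Xᴴ` gives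
`n² ≤ d ∑ᵢⱼ |⟨xᵢ, xⱼ⟩|² = d (n + n (n - 1) α²)`, which rearranges to the bound.
-/

open Finset Matrix
open scoped InnerProductSpace

namespace Matrix

variable {𝕜 m n : Type*} [RCLike 𝕜] [Fintype m] [Fintype n]

theorem trace_mul_conjTranspose_self_eq_sum_norm_sq (A : Matrix m n 𝕜) :
    (A * Aᴴ).trace = ((∑ i, ∑ j, ‖A i j‖ ^ 2 : ℝ) : 𝕜) := by
  simp [trace, mul_apply, RCLike.mul_conj]

theorem sum_norm_sq_conjTranspose_mul_self (A : Matrix m n 𝕜) :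
    ∑ i, ∑ j, ‖(Aᴴ * A) i j‖ ^ 2 = ∑ k, ∑ l, ‖(A * Aᴴ) k l‖ ^ 2 := by
  apply RCLike.ofReal_injective (K := 𝕜)
  have hA := trace_mul_conjTranspose_self_eq_sum_norm_sq (Aᴴ * A)
  have hA' := trace_mul_conjTranspose_self_eq_sum_norm_sq (A * Aᴴ)
  rw [← hA, ← hA', conjTranspose_mul, conjTranspose_mul, conjTranspose_conjTranspose,
    Matrix.mul_assoc, trace_mul_comm]
  simp only [Matrix.mul_assoc]

theorem norm_trace_sq_le_card_mul_sum_norm_sq (A : Matrix m m 𝕜) :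
    ‖A.trace‖ ^ 2 ≤ Fintype.card m * ∑ k, ∑ l, ‖A k l‖ ^ 2 :=
  calc ‖A.trace‖ ^ 2 ≤ (∑ k, ‖A k k‖) ^ 2 := by gcongr; exact norm_sum_le _ _
    _ ≤ Fintype.card m * ∑ k, ‖A k k‖ ^ 2 := sq_sum_le_card_mul_sum_sq
    _ ≤ Fintype.card m * ∑ k, ∑ l, ‖A k l‖ ^ 2 := by
      gcongr with k
      exact single_le_sum (f := fun l => ‖A k l‖ ^ 2) (fun _ _ => by positivity) (mem_univ k)

end Matrix

section

variable {𝕜 ι : Type*} [RCLike 𝕜] [Fintype ι]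

theorem sq_sum_norm_sq_le_card_mul_sum_norm_inner_sq {κ : Type*} [Fintype κ]
    (x : ι → EuclideanSpace 𝕜 κ) :
    (∑ i, ‖x i‖ ^ 2) ^ 2 ≤ Fintype.card κ * ∑ i, ∑ j, ‖⟪x i, x j⟫_𝕜‖ ^ 2 := by
  let X : Matrix κ ι 𝕜 := of fun k i => x i k
  have hgram : Xᴴ * X = gram 𝕜 x := by
    ext i j
    simp [X, mul_apply, PiLp.inner_apply, mul_comm]
  have htrace : ‖(X * Xᴴ).trace‖ = ∑ i, ‖x i‖ ^ 2 := by
    rw [trace_mul_conjTranspose_self_eq_sum_norm_sq, sum_comm,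
      RCLike.norm_ofReal, abs_of_nonneg (by positivity)]
    simp [X, EuclideanSpace.norm_sq_eq]
  have := norm_trace_sq_le_card_mul_sum_norm_sq (X * Xᴴ)
  rwa [htrace, ← sum_norm_sq_conjTranspose_mul_self, hgram] at this

theorem sq_sum_norm_sq_le_finrank_mul_sum_norm_inner_sq {E : Type*} [NormedAddCommGroup E]
    [InnerProductSpace 𝕜 E] [FiniteDimensional 𝕜 E] (x : ι → E) :
    (∑ i, ‖x i‖ ^ 2) ^ 2 ≤ Module.finrank 𝕜 E * ∑ i, ∑ j, ‖⟪x i, x j⟫_𝕜‖ ^ 2 := by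
  have e := (stdOrthonormalBasis 𝕜 E).repr
  simpa [LinearIsometryEquiv.norm_map, LinearIsometryEquiv.inner_map_map] using
    sq_sum_norm_sq_le_card_mul_sum_norm_inner_sq (fun i => e (x i))

theorem sum_norm_inner_sq_of_equiangular {E : Type*} [NormedAddCommGroup E]
    [InnerProductSpace 𝕜 E] {x : ι → E} {α : ℝ} (hunit : ∀ i, ‖x i‖ = 1)
    (hangle : ∀ i j, i ≠ j → ‖⟪x i, x j⟫_𝕜‖ = α) :
    ∑ i, ∑ j, ‖⟪x i, x j⟫_𝕜‖ ^ 2 = Fintype.card ι * (1 + (Fintype.card ι - 1) * α ^ 2) := by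
  have hrow (i : ι) : ∑ j, ‖⟪x i, x j⟫_𝕜‖ ^ 2 = 1 + (Fintype.card ι - 1) * α ^ 2 := by
    classical
    rw [← add_sum_erase _ _ (mem_univ i), inner_self_eq_norm_sq_to_K, hunit,
      sum_congr rfl fun j hj => by rw [hangle i j (ne_of_mem_erase hj).symm],
      sum_const, card_erase_of_mem (mem_univ i), card_univ, nsmul_eq_mul,
      Nat.cast_pred (Fintype.card_pos_iff.2 ⟨i⟩)]
    simp
  simp only [hrow, sum_const, card_univ, nsmul_eq_mul]

end

theorem relative_bound_general {𝕜 : Type*} [RCLike 𝕜] (n d : ℕ) (hn : 0 < n)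
    (α : ℝ)
    (x : Fin n → EuclideanSpace 𝕜 (Fin d))
    (hunit : ∀ i, ‖x i‖ = 1)
    (hangle : ∀ i j, i ≠ j → ‖(inner 𝕜 (x i) (x j) : 𝕜)‖ = α) :
    ((n : ℝ) - d) / (((n : ℝ) - 1) * d) ≤ α ^ 2 := by
  have hbound := sq_sum_norm_sq_le_finrank_mul_sum_norm_inner_sq (𝕜 := 𝕜) x
  simp only [hunit, one_pow, sum_const, card_univ, Fintype.card_fin, nsmul_eq_mul, mul_one,
    sum_norm_inner_sq_of_equiangular hunit hangle, finrank_euclideanSpace_fin] at hbound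
  have hn_one : (1 : ℝ) ≤ n := by exact_mod_cast hn
  refine div_le_of_le_mul₀ (by positivity) (sq_nonneg α) ?_
  nlinarith

/-- **Relative (Welch) bound.** If there exist `n` equiangular lines in `𝕜^d`
(`𝕜 = ℝ` or `ℂ`), i.e. unit vectors spanning pairwise distinct lines whose pairwise
inner products all have absolute value `α`, then `α² ≥ (n - d)/((n-1)d)`. -/
theorem relative_bound {𝕜 : Type*} [RCLike 𝕜] (n d : ℕ) (hn : 0 < n) (hd : 0 < d)
    (α : ℝ) (hα : 0 ≤ α)
    (x : Fin n → EuclideanSpace 𝕜 (Fin d))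
    (hunit : ∀ i, ‖x i‖ = 1)
    (hdistinct : ∀ i j, i ≠ j → ∀ c : 𝕜, x i ≠ c • x j)
    (hangle : ∀ i j, i ≠ j → ‖(inner 𝕜 (x i) (x j) : 𝕜)‖ = α) :
    ((n : ℝ) - d) / (((n : ℝ) - 1) * d) ≤ α ^ 2 :=
  relative_bound_general n d hn α x hunit hangle
end

section
/- If there exist n equiangular lines in C^d, then n ≤ d². -/
/-!
Send each unit vector `x` to the rank-one matrix `x xᴴ`, viewed as a vector in `ℂ^(d×d)`.
The inner product of the images of `x` and `y` is `|⟨x, y⟩|²`, so the images of `n` equiangular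
lines have Gram matrix `(1 - α²) I + α² J`, which is positive definite. Hence they are linearly
independent in a space of dimension `d²`.
-/

open Matrix
open scoped InnerProductSpace ComplexConjugate ComplexOrder

section GramConstant

variable {𝕜 E ι : Type*} [RCLike 𝕜] [SeminormedAddCommGroup E] [InnerProductSpace 𝕜 E]

theorem linearIndependent_of_inner_self_eq_of_inner_eq [Finite ι] (v : ι → E) {a b : ℝ}
    (hb : 0 ≤ b) (hba : b < a) (hself : ∀ i, ⟪v i, v i⟫_𝕜 = a)
    (hinner : ∀ i j, i ≠ j → ⟪v i, v j⟫_𝕜 = b) :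
    LinearIndependent 𝕜 v := by
  classical
  have hgram : gram 𝕜 v = (a - b) • (1 : Matrix ι ι 𝕜) + b • vecMulVec 1 (star 1) := by
    ext i j
    rcases eq_or_ne i j with rfl | hij
    · simp only [gram_apply, hself]
      simp [RCLike.real_smul_eq_coe_mul]
    · simp only [gram_apply, hinner i j hij]
      simp [hij, RCLike.real_smul_eq_coe_mul]
  apply linearIndependent_of_posDef_gram
  rw [hgram]
  exact (PosDef.one.smul (sub_pos.2 hba)).add_posSemidef
    ((posSemidef_vecMulVec_self_star 1).smul hb)

end GramConstant

namespace EuclideanSpace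

variable {𝕜 m : Type*} [RCLike 𝕜] [Fintype m]

noncomputable def outerSelf (x : EuclideanSpace 𝕜 m) : EuclideanSpace 𝕜 (m × m) :=
  WithLp.toLp 2 fun p => x p.1 * conj (x p.2)

theorem inner_outerSelf (x y : EuclideanSpace 𝕜 m) :
    ⟪outerSelf x, outerSelf y⟫_𝕜 = (‖⟪x, y⟫_𝕜‖ ^ 2 : ℝ) := by
  rw [RCLike.ofReal_pow, ← RCLike.mul_conj, inner_conj_symm]
  simp only [outerSelf, PiLp.inner_apply, RCLike.inner_apply, Fintype.sum_prod_type,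
    Finset.sum_mul_sum, map_mul, RCLike.conj_conj]
  refine Finset.sum_congr rfl fun a _ => Finset.sum_congr rfl fun b _ => ?_
  ring

end EuclideanSpace

theorem absolute_bound_complex_general (n d : ℕ)
    (α : ℝ) (hα0 : 0 ≤ α) (hα1 : α < 1)
    (x : Fin n → EuclideanSpace ℂ (Fin d))
    (hunit : ∀ i, ‖x i‖ = 1)
    (hangle : ∀ i j, i ≠ j → ‖(inner ℂ (x i) (x j) : ℂ)‖ = α) :
    n ≤ d ^ 2 := by
  have hindep : LinearIndependent ℂ fun i => EuclideanSpace.outerSelf (x i) :=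
    linearIndependent_of_inner_self_eq_of_inner_eq _ (a := 1) (b := α ^ 2) (sq_nonneg α)
      (by nlinarith)
      (fun i => by rw [EuclideanSpace.inner_outerSelf, inner_self_eq_norm_sq_to_K, hunit]; simp)
      (fun i j hij => by simp [EuclideanSpace.inner_outerSelf, hangle i j hij])
  simpa [sq] using hindep.fintype_card_le_finrank

/-- **Absolute (Gerzon) bound, complex case.** If there exist `n` equiangular
lines in `ℂ^d`, then `n ≤ d²`. -/
theorem absolute_bound_complex (n d : ℕ) (hd : 0 < d)
    (α : ℝ) (hα0 : 0 ≤ α) (hα1 : α < 1)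
    (x : Fin n → EuclideanSpace ℂ (Fin d))
    (hunit : ∀ i, ‖x i‖ = 1)
    (hangle : ∀ i j, i ≠ j → ‖(inner ℂ (x i) (x j) : ℂ)‖ = α) :
    n ≤ d ^ 2 :=
  absolute_bound_complex_general n d α hα0 hα1 x hunit hangle
end

section
/- If there exist n equiangular lines in R^d, then n ≤ d(d+1)/2. -/
/-!
The rank-one matrices `xᵢ xᵢᵀ` are linearly independent: their Gram matrix for the Frobenius
inner product is `(⟪xᵢ, xⱼ⟫²) = (1 - α²) I + α² J`, which is positive definite since `α² < 1`.
They are symmetric, so they live in a space of dimension `d (d + 1) / 2`, indexed by `Sym2 (Fin d)`.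
-/

open Matrix

section

variable {ι κ : Type*}

theorem posDef_one_sub_smul_one_add_smul_vecMulVec_one [Fintype κ] [DecidableEq κ] {β : ℝ}
    (hβ0 : 0 ≤ β) (hβ1 : β < 1) :
    ((1 - β) • (1 : Matrix κ κ ℝ) + β • vecMulVec 1 1).PosDef := by
  refine (PosDef.one.smul (sub_pos.2 hβ1)).add_posSemidef (PosSemidef.smul ?_ hβ0)
  simpa using posSemidef_vecMulVec_self_star (1 : κ → ℝ)

def selfOuter (x : EuclideanSpace ℝ ι) : EuclideanSpace ℝ (ι × ι) :=
  WithLp.toLp 2 fun p => x p.1 * x p.2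

theorem inner_selfOuter [Fintype ι] (x y : EuclideanSpace ℝ ι) :
    inner ℝ (selfOuter x) (selfOuter y) = inner ℝ x y ^ 2 := by
  simp only [selfOuter, PiLp.inner_apply, RCLike.inner_apply, conj_trivial,
    Fintype.sum_prod_type, sq, Finset.sum_mul_sum]
  refine Finset.sum_congr rfl fun a _ => Finset.sum_congr rfl fun b _ => ?_
  ring

def sym2Square (x : ι → ℝ) : Sym2 ι → ℝ :=
  Sym2.lift ⟨fun a b => x a * x b, fun a b => mul_comm (x a) (x b)⟩

def unfoldSym2 : (Sym2 ι → ℝ) →ₗ[ℝ] EuclideanSpace ℝ (ι × ι) :=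
  (WithLp.linearEquiv 2 ℝ (ι × ι → ℝ)).symm.toLinearMap ∘ₗ
    LinearMap.funLeft ℝ ℝ fun p : ι × ι => s(p.1, p.2)

theorem unfoldSym2_sym2Square (x : EuclideanSpace ℝ ι) :
    unfoldSym2 (sym2Square x) = selfOuter x :=
  rfl

theorem linearIndependent_sym2Square [Fintype ι] [Finite κ] {v : κ → EuclideanSpace ℝ ι}
    (h : (of fun i j => inner ℝ (v i) (v j) ^ 2 : Matrix κ κ ℝ).PosDef) :
    LinearIndependent ℝ fun i => sym2Square (v i) := by
  have hgram : gram ℝ (fun i => unfoldSym2 (sym2Square (v i))) =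
      of fun i j => inner ℝ (v i) (v j) ^ 2 := by
    ext i j
    simp only [unfoldSym2_sym2Square, gram_apply, inner_selfOuter, of_apply]
  exact LinearIndependent.of_comp unfoldSym2 (linearIndependent_of_posDef_gram (hgram ▸ h))

theorem card_le_of_posDef_sq_inner [Fintype ι] [Fintype κ] {v : κ → EuclideanSpace ℝ ι}
    (h : (of fun i j => inner ℝ (v i) (v j) ^ 2 : Matrix κ κ ℝ).PosDef) :
    Fintype.card κ ≤ Fintype.card ι * (Fintype.card ι + 1) / 2 := by
  have := (linearIndependent_sym2Square h).fintype_card_le_finrank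
  rwa [Module.finrank_fintype_fun_eq_card, Sym2.card, Nat.choose_two_right, Nat.add_sub_cancel,
    Nat.mul_comm] at this

end

theorem absolute_bound_real_general (n d : ℕ)
    (α : ℝ) (hα0 : 0 ≤ α) (hα1 : α < 1)
    (x : Fin n → EuclideanSpace ℝ (Fin d))
    (hunit : ∀ i, ‖x i‖ = 1)
    (hangle : ∀ i j, i ≠ j → ‖(inner ℝ (x i) (x j) : ℝ)‖ = α) :
    n ≤ d * (d + 1) / 2 := by
  have hsq : (of fun i j => inner ℝ (x i) (x j) ^ 2 : Matrix (Fin n) (Fin n) ℝ) =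
      (1 - α ^ 2) • 1 + α ^ 2 • vecMulVec 1 1 := by
    ext i j
    by_cases hij : i = j
    · subst hij
      simp [hunit]
    · simp [hij, ← sq_abs, ← Real.norm_eq_abs, hangle i j hij]
  have hpos := posDef_one_sub_smul_one_add_smul_vecMulVec_one (κ := Fin n) (sq_nonneg α)
    (by nlinarith)
  simpa using card_le_of_posDef_sq_inner (v := x) (hsq ▸ hpos)

/-- **Absolute (Gerzon) bound, real case.** If there exist `n` equiangular
lines in `ℝ^d`, then `n ≤ d(d+1)/2`. -/
theorem absolute_bound_real (n d : ℕ) (hd : 0 < d)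
    (α : ℝ) (hα0 : 0 ≤ α) (hα1 : α < 1)
    (x : Fin n → EuclideanSpace ℝ (Fin d))
    (hunit : ∀ i, ‖x i‖ = 1)
    (hangle : ∀ i j, i ≠ j → ‖(inner ℝ (x i) (x j) : ℝ)‖ = α) :
    n ≤ d * (d + 1) / 2 :=
  absolute_bound_real_general n d α hα0 hα1 x hunit hangle
end

section
/- Let n, r, c be positive integers with r ≥ 2, δ = n − rc − 2, and let θ > 0 > τ be the roots of x² − δx − (n−1). If δ ≠ 0 and the multiplicities m_θ = n(r−1)(−τ)/(θ−τ) and m_τ = n(r−1)θ/(θ−τ) are integers, then θ and τ are integers. -/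
/-!
Subtracting the two multiplicities gives `(m_τ - m_θ)(θ - τ) = n(r-1)δ`, so `θ - τ` is rational;
its square `δ² + 4(n-1)` is an integer, hence `θ - τ` is an integer `e`. Since `e² ≡ δ² (mod 4)`,
`e` and `δ` have the same parity and `θ = (δ + e)/2`, `τ = (δ - e)/2` are integers.
-/

section CharZeroField

variable {K : Type*} [Field K] [CharZero K]

theorem exists_intCast_eq_of_mul_eq_of_sq_eq {x : K} {k M D : ℤ} (hk : k ≠ 0)
    (hmul : (k : K) * x = M) (hsq : x ^ 2 = D) : ∃ e : ℤ, x = e := by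
  have hkM : k ^ 2 * D = M ^ 2 := by
    have : ((k ^ 2 * D : ℤ) : K) = ((M ^ 2 : ℤ) : K) := by
      push_cast
      rw [← hsq, ← hmul]
      ring
    exact_mod_cast this
  obtain ⟨e, rfl⟩ : k ∣ M := (Int.pow_dvd_pow_iff two_ne_zero).mp ⟨D, hkM.symm⟩
  refine ⟨e, mul_left_cancel₀ (Int.cast_ne_zero.mpr hk) ?_⟩
  rw [hmul]
  push_cast
  ring

theorem Int.even_add_of_sq_eq_sq_add_four_mul {d e p : ℤ} (h : e ^ 2 = d ^ 2 + 4 * p) :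
    Even (d + e) := by
  have hsq : Even (e ^ 2) ↔ Even (d ^ 2) := by
    rw [h, Int.even_add]
    exact iff_true_right (⟨2 * p, by ring⟩ : Even (4 * p))
  rw [Int.even_pow' two_ne_zero, Int.even_pow' two_ne_zero] at hsq
  exact Int.even_add.mpr hsq.symm

theorem exists_intCast_eq_of_add_of_mul_of_sub {θ τ : K} {d p e : ℤ} (hsum : θ + τ = d)
    (hprod : θ * τ = p) (hsub : θ - τ = e) : (∃ a : ℤ, θ = a) ∧ ∃ b : ℤ, τ = b := by
  have hdisc : e ^ 2 = d ^ 2 + 4 * -p := by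
    have : ((e ^ 2 : ℤ) : K) = ((d ^ 2 + 4 * -p : ℤ) : K) := by
      push_cast
      rw [← hsum, ← hprod, ← hsub]
      ring
    exact_mod_cast this
  obtain ⟨a, ha⟩ := Int.even_add_of_sq_eq_sq_add_four_mul hdisc
  have hθ : θ = a := by
    refine mul_left_cancel₀ (two_ne_zero : (2 : K) ≠ 0) ?_
    have : ((d + e : ℤ) : K) = a + a := by rw [ha]; push_cast; ring
    push_cast at this
    linear_combination hsum + hsub + this
  exact ⟨⟨a, hθ⟩, ⟨a - e, by push_cast; linear_combination hθ - hsub⟩⟩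

end CharZeroField

theorem drackn_eigenvalues_integral_general (n r c : ℕ) (hn : 0 < n) (hr : 2 ≤ r)
    (δ θ τ : ℝ) (hδ : δ = (n : ℝ) - r * c - 2)
    (hprod : θ * τ = -((n : ℝ) - 1)) (hsum : θ + τ = δ)
    (hδne : δ ≠ 0)
    (mθ mτ : ℤ)
    (hmθ : (mθ : ℝ) = (n : ℝ) * ((r : ℝ) - 1) * (-τ) / (θ - τ))
    (hmτ : (mτ : ℝ) = (n : ℝ) * ((r : ℝ) - 1) * θ / (θ - τ)) :
    (∃ a : ℤ, θ = (a : ℝ)) ∧ (∃ b : ℤ, τ = (b : ℝ)) := by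
  obtain ⟨d, hd⟩ : ∃ d : ℤ, (d : ℝ) = δ := ⟨n - r * c - 2, by rw [hδ]; push_cast; ring⟩
  have hn1 : (1 : ℝ) ≤ n := by exact_mod_cast hn
  have hr2 : (2 : ℝ) ≤ r := by exact_mod_cast hr
  -- a double root would satisfy `θ² = 1 - n ≤ 0`, forcing `θ = 0 = δ`
  have hsub : θ - τ ≠ 0 := by
    intro h
    have hθ : θ = 0 := by nlinarith
    exact hδne (by linarith)
  have hkey : ((mτ - mθ : ℤ) : ℝ) * (θ - τ) = n * (r - 1) * δ := by
    rw [Int.cast_sub, hmθ, hmτ, ← hsum]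
    field_simp
    ring
  have hk : mτ - mθ ≠ 0 := by
    rintro hk
    rw [hk, Int.cast_zero, zero_mul, eq_comm] at hkey
    exact mul_ne_zero (by nlinarith) hδne hkey
  obtain ⟨e, he⟩ := exists_intCast_eq_of_mul_eq_of_sq_eq (M := n * (r - 1) * d)
    (D := d ^ 2 + 4 * (n - 1)) hk (by rw [hkey, ← hd]; push_cast; ring)
    (by push_cast; rw [hd, ← hsum]; linear_combination (-4) * hprod)
  exact exists_intCast_eq_of_add_of_mul_of_sub (d := d) (p := -(n - 1)) (by rw [hd, hsum])
    (by push_cast; exact hprod) he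

/-- **Integrality of drackn eigenvalues.** Let `n, r, c` be positive integers
with `r ≥ 2`, `δ = n - rc - 2`, and let `θ > 0 > τ` be the roots of
`x² - δx - (n-1)`.  If `δ ≠ 0` and the multiplicities
`m_θ = n(r-1)(-τ)/(θ-τ)` and `m_τ = n(r-1)θ/(θ-τ)` are integers, then `θ` and
`τ` are integers. -/
theorem drackn_eigenvalues_integral (n r c : ℕ) (hn : 0 < n) (hr : 2 ≤ r)
    (hc : 0 < c)
    (δ θ τ : ℝ) (hδ : δ = (n : ℝ) - r * c - 2)
    (hθpos : 0 < θ) (hτneg : τ < 0)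
    (hprod : θ * τ = -((n : ℝ) - 1)) (hsum : θ + τ = δ)
    (hδne : δ ≠ 0)
    (mθ mτ : ℤ)
    (hmθ : (mθ : ℝ) = (n : ℝ) * ((r : ℝ) - 1) * (-τ) / (θ - τ))
    (hmτ : (mτ : ℝ) = (n : ℝ) * ((r : ℝ) - 1) * θ / (θ - τ)) :
    (∃ a : ℤ, θ = (a : ℝ)) ∧ (∃ b : ℤ, τ = (b : ℝ)) :=
  drackn_eigenvalues_integral_general n r c hn hr δ θ τ hδ hprod hsum hδne mθ mτ hmθ hmτ
end

section
/- Let X be an abelian (n,r,c)-drackn given by a normalized arc function f with abelian group ⟨f⟩ of order r, and let φ be a non-trivial linear character of ⟨f⟩. Then the n×n matrix A(K_n)^{φ(f)} (with (u,v)-entry φ(f(u,v)) for u ≠ v and 0 on the diagonal) is a Seidel matrix with exactly two distinct eigenvalues θ and τ, of multiplicities m_θ/(r−1) and m_τ/(r−1) respectively, where m_θ, m_τ are the multiplicities of θ, τ in X. -/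
/-!
The cover `X` has vertex set `ι × G`, with `(u, a) ~ (v, a * f u v)`. As `A(X)` has four distinct
eigenvalues, `X` has diameter at most `3`, and the drackn axioms then count the paths
`u → w → v` in `K_n` whose voltage `f u w * f w v` equals `g`: there are `c` of them when
`g ≠ f u v`, and `λ = n - 2 - (r - 1) c` when `g = f u v`. Since the values of a non-trivial
character sum to zero, `M = A(K_n)^{φ(f)}` satisfies `M² = δ M + (n - 1) I` with
`δ = λ - c = n - 2 - r c`. Moreover `x ↦ ((u, a) ↦ φ a * x u)` maps eigenvectors of `M` to
eigenvectors of `A(X)`, so every eigenvalue of `M` is a root of `x² - δ x - (n - 1)` among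
`n - 1, θ, -1, τ`, that is `θ` or `τ`. Finally, the traces of `A(X)^k`, `k ≤ 3`, force
`m_θ + m_τ = (r - 1) n` and `m_θ θ + m_τ τ = 0`, while the traces of `1` and `M` give the same
linear system for the multiplicities in `M` without the factor `r - 1`.
-/

/-- Distance-regular antipodal cover of a complete graph with fibre map `π`,
fibre size `r` and parameter `c`. -/
def IsDracknCover {V ι : Type*} [Fintype V] [Fintype ι] (X : SimpleGraph V)
    (π : V → ι) (r c : ℕ) : Prop :=
  (∀ i : ι, Nat.card {v : V // π v = i} = r) ∧
  (∀ u v : V, X.Adj u v → π u ≠ π v) ∧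
  (∀ (u : V) (i : ι), π u ≠ i → ∃! v : V, π v = i ∧ X.Adj u v) ∧
  (∀ u v : V, u ≠ v → (π u = π v ↔ X.dist u v = 3)) ∧
  (∀ u v : V, X.dist u v = 2 → Nat.card {w : V // X.Adj u w ∧ X.Adj v w} = c)

open Matrix Polynomial Finset

theorem Fintype.sum_comp_eq_sum_natCard_mul {α β R : Type*} [Fintype α] [DecidableEq β]
    [CommSemiring R] {e : α → β} {S : Finset β} (hS : ∀ i, e i ∈ S) (F : β → R) :
    ∑ i, F (e i) = ∑ μ ∈ S, (Nat.card {i // e i = μ} : R) * F μ := by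
  classical
  rw [← sum_fiberwise_of_maps_to fun i _ => hS i]
  refine Finset.sum_congr rfl fun μ _ => ?_
  rw [Finset.sum_congr rfl fun i hi => by rw [(mem_filter.mp hi).2], sum_const,
    Nat.card_eq_fintype_card, Fintype.card_subtype, nsmul_eq_mul]

theorem spectrum.isRoot_of_aeval_eq_zero {𝕜 A : Type*} [Field 𝕜] [Ring A] [Nontrivial A]
    [Algebra 𝕜 A] {a : A} {p : 𝕜[X]} (hp : aeval a p = 0) {μ : 𝕜} (hμ : μ ∈ spectrum 𝕜 a) :
    p.IsRoot μ := by
  have := spectrum.subset_polynomial_aeval a p ⟨μ, hμ, rfl⟩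
  rwa [hp, spectrum.zero_eq, Set.mem_singleton_iff] at this

namespace Matrix

theorem mem_spectrum_iff_exists_mulVec_eq_smul {n K : Type*} [Fintype n] [DecidableEq n] [Field K]
    {B : Matrix n n K} {μ : K} : μ ∈ spectrum K B ↔ ∃ x ≠ 0, B *ᵥ x = μ • x := by
  simp only [← spectrum_toLin', ← Module.End.hasEigenvalue_iff_mem_spectrum,
    Module.End.hasEigenvalue_iff, Submodule.ne_bot_iff, Module.End.mem_eigenspace_iff,
    toLin'_apply]
  tauto

namespace IsHermitian

variable {n 𝕜 : Type*} [Fintype n] [DecidableEq n] [RCLike 𝕜] {A : Matrix n n 𝕜}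
  (hA : A.IsHermitian)
include hA

theorem trace_cfc (f : ℝ → ℝ) : (cfc f A).trace = ∑ i, (f (hA.eigenvalues i) : 𝕜) := by
  rw [cfc_eq hA f, IsHermitian.cfc, Unitary.conjStarAlgAut_apply, trace_mul_cycle,
    Unitary.coe_star_mul_self, one_mul, trace_diagonal]
  rfl

theorem trace_pow (k : ℕ) : (A ^ k).trace = ∑ i, (hA.eigenvalues i : 𝕜) ^ k := by
  rw [← cfc_pow_id (R := ℝ) A k hA.isSelfAdjoint, hA.trace_cfc]
  simp

theorem aeval_eq_zero_of_forall_isRoot {p : ℝ[X]} (hp : ∀ i, p.IsRoot (hA.eigenvalues i)) :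
    aeval A p = 0 := by
  rw [← cfc_polynomial p A hA.isSelfAdjoint, ← cfc_zero ℝ A]
  refine cfc_congr fun μ hμ => ?_
  rw [hA.spectrum_real_eq_range_eigenvalues] at hμ
  obtain ⟨i, rfl⟩ := hμ
  exact hp i

theorem sum_eigenvalues_eq_zero (htr : A.trace = 0) : ∑ i, hA.eigenvalues i = 0 := by
  have := hA.trace_eq_sum_eigenvalues
  rw [htr] at this
  exact_mod_cast this.symm

variable {θ τ : ℝ} (hmem : ∀ i, hA.eigenvalues i = θ ∨ hA.eigenvalues i = τ)
include hmem

theorem natCard_eigenvalues_of_trace_eq_zero (htr : A.trace = 0) (hθτ : θ ≠ τ) :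
    (Nat.card {i // hA.eigenvalues i = θ} : ℝ) + Nat.card {i // hA.eigenvalues i = τ} =
        Fintype.card n ∧
      Nat.card {i // hA.eigenvalues i = θ} * θ + Nat.card {i // hA.eigenvalues i = τ} * τ = 0 := by
  have hS : ∀ i, hA.eigenvalues i ∈ ({θ, τ} : Finset ℝ) := by simpa using hmem
  have hsplit := Fintype.sum_comp_eq_sum_natCard_mul (R := ℝ) hS
  constructor
  · simpa [sum_pair hθτ] using (hsplit fun _ => (1 : ℝ)).symm
  · simpa [sum_pair hθτ, hA.sum_eigenvalues_eq_zero htr] using (hsplit id).symm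

theorem exists_eigenvalues_eq_of_trace_eq_zero [Nonempty n] (htr : A.trace = 0) (hθ : 0 < θ)
    (hτ : τ < 0) : (∃ i, hA.eigenvalues i = θ) ∧ ∃ i, hA.eigenvalues i = τ := by
  have hsum := hA.sum_eigenvalues_eq_zero htr
  constructor <;> by_contra! h
  · have := sum_neg (fun i _ => ((hmem i).resolve_left (h i)).trans_lt hτ) univ_nonempty
    linarith
  · have := sum_pos (fun i _ => hθ.trans_eq ((hmem i).resolve_right (h i)).symm) univ_nonempty
    linarith

end IsHermitian

end Matrix

namespace SimpleGraph

variable {V : Type*} [Fintype V] (G : SimpleGraph V) [DecidableRel G.Adj]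

theorem spectrum_adjMatrix_subset [DecidableEq V] {R S : Type*} [CommRing R] [Ring S]
    [Algebra R S] : spectrum R (G.adjMatrix S) ⊆ spectrum R (G.adjMatrix R) := by
  have : G.adjMatrix S = (Algebra.ofId R S).mapMatrix (G.adjMatrix R) := by
    ext u v
    by_cases h : G.Adj u v <;> simp [h]
  rw [this]
  exact AlgHom.spectrum_apply_subset _ _

theorem adjMatrix_mul_self_apply {α : Type*} [NonAssocSemiring α] (u v : V) :
    (G.adjMatrix α * G.adjMatrix α) u v = Nat.card {w // G.Adj u w ∧ G.Adj v w} := by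
  rw [adjMatrix_mul_apply, Nat.card_eq_fintype_card, Fintype.card_subtype,
    neighborFinset_eq_filter]
  simp only [adjMatrix_apply, sum_boole, filter_filter, G.adj_comm _ v]

/-- `A ^ dist u v` has a nonzero `(u, v)` entry while all lower powers vanish there, so
`X ^ dist u v` cannot be reduced modulo `p`. -/
theorem dist_lt_natDegree_of_aeval_adjMatrix_eq_zero [DecidableEq V] {α : Type*} [CommRing α]
    [CharZero α] {p : α[X]} (hp : p.Monic) (hA : aeval (G.adjMatrix α) p = 0) {u v : V}
    (huv : G.Reachable u v) : G.dist u v < p.natDegree := by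
  by_contra! hle
  have : Nonempty V := ⟨u⟩
  have hp1 : p ≠ 1 := by rintro rfl; simp at hA
  have hlow : ∀ k < G.dist u v, (G.adjMatrix α ^ k) u v = 0 := by
    intro k hk
    rw [adjMatrix_pow_apply_eq_card_walk, Nat.cast_eq_zero, Fintype.card_eq_zero_iff]
    exact ⟨fun w => (w.2 ▸ G.dist_le w.1).not_gt hk⟩
  have htop : (G.adjMatrix α ^ G.dist u v) u v ≠ 0 := by
    obtain ⟨w, hw⟩ := huv.exists_walk_length_eq_dist
    rw [adjMatrix_pow_apply_eq_card_walk, Nat.cast_ne_zero, ← Nat.pos_iff_ne_zero]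
    exact Fintype.card_pos_iff.mpr ⟨⟨w, hw⟩⟩
  apply htop
  have hdeg := natDegree_modByMonic_lt (X ^ G.dist u v) hp hp1
  rw [← aeval_X_pow (R := α), ← aeval_modByMonic_eq_self_of_root hA,
    aeval_eq_sum_range' hdeg, Matrix.sum_apply]
  exact sum_eq_zero fun k hk => by
    rw [Matrix.smul_apply, hlow k ((mem_range.mp hk).trans_le hle), smul_zero]

variable {G}

theorem dist_lt_card_of_eigenvalues_mem [DecidableEq V] (hA : (G.adjMatrix ℝ).IsHermitian)
    {S : Finset ℝ} (hS : ∀ i, hA.eigenvalues i ∈ S) {u v : V} (huv : G.Reachable u v) :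
    G.dist u v < #S := by
  have h := G.dist_lt_natDegree_of_aeval_adjMatrix_eq_zero
    (monic_prod_of_monic S (fun μ => X - C μ) fun μ _ => monic_X_sub_C μ)
    (hA.aeval_eq_zero_of_forall_isRoot fun i => ?_) huv
  · simpa using h
  · simp only [IsRoot, eval_prod, eval_sub, eval_X, eval_C]
    exact prod_eq_zero (hS i) (sub_self _)

end SimpleGraph

theorem MonoidHom.norm_apply_eq_one {G : Type*} [Group G] [Finite G] (φ : G →* ℂ) (g : G) :
    ‖φ g‖ = 1 :=
  Complex.norm_eq_one_of_pow_eq_one (by rw [← map_pow, pow_card_eq_one', map_one])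
    Nat.card_pos.ne'

theorem MonoidHom.apply_inv_eq_inv {G R : Type*} [Group G] [DivisionRing R] (φ : G →* R)
    (g : G) : φ g⁻¹ = (φ g)⁻¹ :=
  eq_inv_of_mul_eq_one_right (by rw [← map_mul, mul_inv_cancel, map_one])

theorem ne_sub_one_and_ne_neg_one_of_sq_eq {n r c μ : ℝ} (hrc : r * c ≠ 0) (hn : 2 ≤ n)
    (hμ : μ ^ 2 = (n - 2 - r * c) * μ + (n - 1)) : μ ≠ n - 1 ∧ μ ≠ -1 := by
  refine ⟨fun h => hrc ?_, fun h => hrc ?_⟩ <;> subst h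
  · exact (mul_eq_zero.mp (by linear_combination hμ : (n - 1) * (r * c) = 0)).resolve_left
      (by linarith)
  · linear_combination -hμ

/-- Here `a, m_θ, b, m_τ` are the multiplicities of `n - 1, θ, -1, τ`; the combinations of the
power sums below isolate `b = a (n - 1)` and then `a = 1`. -/
theorem multiplicities_of_power_sums {n r c θ τ a b mθ mτ : ℝ}
    (hθ : θ ^ 2 = (n - 2 - r * c) * θ + (n - 1)) (hτ : τ ^ 2 = (n - 2 - r * c) * τ + (n - 1))
    (hrc : r * c ≠ 0) (hn : n * (n - 1) ≠ 0)
    (E0 : a + mθ + b + mτ = n * r)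
    (E1 : a * (n - 1) + mθ * θ + b * (-1) + mτ * τ = 0)
    (E2 : a * (n - 1) ^ 2 + mθ * θ ^ 2 + b * (-1) ^ 2 + mτ * τ ^ 2 = n * r * (n - 1))
    (E3 : a * (n - 1) ^ 3 + mθ * θ ^ 3 + b * (-1) ^ 3 + mτ * τ ^ 3 =
      n * r * ((n - 1) * (n - 2 - (r - 1) * c))) :
    mθ + mτ = (r - 1) * n ∧ mθ * θ + mτ * τ = 0 := by
  set δ := n - 2 - r * c
  have hb : b = a * (n - 1) := by
    have : r * c * (a * (n - 1) - b) = 0 := by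
      linear_combination E2 - δ * E1 - (n - 1) * E0 - mθ * hθ - mτ * hτ
    linear_combination -(mul_eq_zero.mp this).resolve_left hrc
  have ha : a = 1 := by
    have : r * c * (n * (n - 1)) * (a - 1) = 0 := by
      linear_combination E3 - δ * E2 - (n - 1) * E1 - mθ * θ * hθ - mτ * τ * hτ - r * c * hb
    linear_combination (mul_eq_zero.mp this).resolve_left (mul_ne_zero hrc hn)
  constructor
  · linear_combination E0 - n * ha - hb
  · linear_combination E1 + hb

theorem eq_mul_of_moments {θ τ s n kθ kτ mθ mτ : ℝ} (hθτ : θ ≠ τ) (hk0 : kθ + kτ = n)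
    (hk1 : kθ * θ + kτ * τ = 0) (hm0 : mθ + mτ = s * n) (hm1 : mθ * θ + mτ * τ = 0) :
    mθ = s * kθ ∧ mτ = s * kτ := by
  have h := sub_ne_zero.mpr hθτ
  constructor <;> apply mul_right_cancel₀ h
  · linear_combination hm1 - τ * hm0 - s * hk1 + s * τ * hk0
  · linear_combination -hm1 + θ * hm0 + s * hk1 - s * θ * hk0

def coverGraph {ι G : Type*} [Mul G] (f : ι → ι → G) : SimpleGraph (ι × G) :=
  SimpleGraph.fromRel fun x y => x.1 ≠ y.1 ∧ y.2 = x.2 * f x.1 y.1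

def pathCount {ι G : Type*} [Fintype ι] [DecidableEq ι] [Mul G] [DecidableEq G]
    (f : ι → ι → G) (u v : ι) (g : G) : ℕ :=
  #{w | w ≠ u ∧ w ≠ v ∧ f u w * f w v = g}

def charMatrix {ι G R : Type*} [DecidableEq ι] [MulOneClass G] [Semiring R] (φ : G →* R)
    (f : ι → ι → G) : Matrix ι ι R :=
  of fun u v => if u = v then 0 else φ (f u v)

namespace coverGraph

variable {ι G : Type*} [Group G] {f : ι → ι → G}

theorem adj (hsym : ∀ u v, f v u = (f u v)⁻¹) {u v : ι} {a b : G} :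
    (coverGraph f).Adj (u, a) (v, b) ↔ u ≠ v ∧ b = a * f u v := by
  simp only [coverGraph, SimpleGraph.fromRel_adj, ne_eq, Prod.mk.injEq, hsym v u,
    eq_mul_inv_iff_mul_eq, eq_comm (a := a), eq_comm (a := v)]
  tauto

variable [Fintype ι] [DecidableEq ι] [Fintype G] [DecidableEq G]

theorem sum_pathCount {u v : ι} (huv : u ≠ v) :
    ∑ g, pathCount f u v g = Fintype.card ι - 2 := by
  have hcard : #{w | w ≠ u ∧ w ≠ v} = Fintype.card ι - 2 := by
    have : ({w | w ≠ u ∧ w ≠ v} : Finset ι) = {u, v}ᶜ := by ext; simp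
    rw [this, card_compl, card_pair huv]
  rw [← hcard, card_eq_sum_card_fiberwise fun w _ => mem_univ (f u w * f w v)]
  simp only [pathCount, filter_filter, and_assoc]

theorem card_commonNeighbors (hsym : ∀ u v, f v u = (f u v)⁻¹) {u v : ι} (a g : G) :
    Nat.card {s // (coverGraph f).Adj (u, a) s ∧ (coverGraph f).Adj (v, a * g) s} =
      pathCount f u v g := by
  classical
  have key : ∀ w, a * f u w = a * g * f v w ↔ f u w * f w v = g := fun w => by
    rw [hsym v w, mul_assoc, mul_right_inj, mul_inv_eq_iff_eq_mul]
  have : ({s | (coverGraph f).Adj (u, a) s ∧ (coverGraph f).Adj (v, a * g) s} : Finset (ι × G)) =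
      ({w | w ≠ u ∧ w ≠ v ∧ f u w * f w v = g} : Finset ι).image fun w => (w, a * f u w) := by
    ext ⟨w, b⟩
    simp only [mem_filter, mem_univ, true_and, adj hsym, mem_image, Prod.mk.injEq]
    constructor
    · rintro ⟨⟨hu, rfl⟩, hv, hb⟩
      exact ⟨w, ⟨hu.symm, hv.symm, (key w).mp hb⟩, rfl, rfl⟩
    · rintro ⟨w, ⟨hu, hv, hg⟩, rfl, rfl⟩
      exact ⟨⟨hu.symm, rfl⟩, hv.symm, (key w).mpr hg⟩
  rw [Nat.card_eq_fintype_card, Fintype.card_subtype, this,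
    card_image_of_injective _ fun v w h => congrArg Prod.fst h, pathCount]

variable [DecidableRel (coverGraph f).Adj] (hsym : ∀ u v, f v u = (f u v)⁻¹)
include hsym

theorem neighborFinset_eq (u : ι) (a : G) :
    (coverGraph f).neighborFinset (u, a) = (univ.erase u).image fun v => (v, a * f u v) := by
  ext ⟨v, b⟩
  simp [adj hsym, eq_comm (a := v), eq_comm (a := b)]

theorem degree_eq (x : ι × G) : (coverGraph f).degree x = Fintype.card ι - 1 := by
  obtain ⟨u, a⟩ := x
  rw [← SimpleGraph.card_neighborFinset_eq_degree, neighborFinset_eq hsym,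
    card_image_of_injective _ fun v w h => congrArg Prod.fst h, card_erase_of_mem (mem_univ _),
    card_univ]

theorem adjMatrix_pow_three_apply_self {R : Type*} [Semiring R] {l : ℕ}
    (hl : ∀ u v, u ≠ v → pathCount f u v (f u v) = l) (x : ι × G) :
    ((coverGraph f).adjMatrix R ^ 3) x x = ((Fintype.card ι - 1) * l : ℕ) := by
  obtain ⟨u, a⟩ := x
  have hterm : ∀ v ∈ univ.erase u,
      ((coverGraph f).adjMatrix R * (coverGraph f).adjMatrix R) (v, a * f u v) (u, a) = l := by
    intro v hv
    have hback : ((u, a) : ι × G) = (u, a * f u v * f v u) := by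
      rw [hsym u v, mul_inv_cancel_right]
    rw [hback, SimpleGraph.adjMatrix_mul_self_apply, card_commonNeighbors hsym,
      hl v u (ne_of_mem_erase hv)]
  rw [pow_succ', pow_two, SimpleGraph.adjMatrix_mul_apply, neighborFinset_eq hsym,
    sum_image fun v _ w _ h => congrArg Prod.fst h, sum_congr rfl hterm, sum_const,
    card_erase_of_mem (mem_univ u), card_univ, nsmul_eq_mul]
  push_cast
  rfl

theorem trace_adjMatrix_pow_two {R : Type*} [Semiring R] :
    ((coverGraph f).adjMatrix R ^ 2).trace =
      (Fintype.card ι * Fintype.card G * (Fintype.card ι - 1) : ℕ) := by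
  simp only [trace, diag_apply, sq, SimpleGraph.adjMatrix_mul_self_apply_self, degree_eq hsym,
    sum_const, card_univ, Fintype.card_prod, nsmul_eq_mul, Nat.cast_mul]

theorem trace_adjMatrix_pow_three {R : Type*} [Semiring R] {l : ℕ}
    (hl : ∀ u v, u ≠ v → pathCount f u v (f u v) = l) :
    ((coverGraph f).adjMatrix R ^ 3).trace =
      (Fintype.card ι * Fintype.card G * ((Fintype.card ι - 1) * l) : ℕ) := by
  simp only [trace, diag_apply, adjMatrix_pow_three_apply_self hsym hl, sum_const, card_univ,
    Fintype.card_prod, nsmul_eq_mul, Nat.cast_mul]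

theorem adjMatrix_mulVec_lift {R : Type*} [CommSemiring R] (φ : G →* R) (x : ι → R) :
    (coverGraph f).adjMatrix R *ᵥ (fun p => φ p.2 * x p.1) =
      fun p => φ p.2 * (charMatrix φ f *ᵥ x) p.1 := by
  funext ⟨u, a⟩
  rw [SimpleGraph.adjMatrix_mulVec_apply, neighborFinset_eq hsym,
    sum_image fun v _ w _ h => congrArg Prod.fst h]
  simp [mulVec, dotProduct, charMatrix, mul_sum, mul_assoc, sum_ite, filter_ne]

theorem spectrum_charMatrix_subset {K : Type*} [Field K] (φ : G →* K) :
    spectrum K (charMatrix φ f) ⊆ spectrum K ((coverGraph f).adjMatrix K) := by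
  intro μ hμ
  obtain ⟨x, hx0, hx⟩ := mem_spectrum_iff_exists_mulVec_eq_smul.mp hμ
  obtain ⟨j, hj⟩ := Function.ne_iff.mp hx0
  refine mem_spectrum_iff_exists_mulVec_eq_smul.mpr ⟨fun p => φ p.2 * x p.1, ?_, ?_⟩
  · exact Function.ne_iff.mpr ⟨(j, 1), by simpa using hj⟩
  · rw [adjMatrix_mulVec_lift hsym, hx]
    funext p
    simp only [Pi.smul_apply, smul_eq_mul]
    ring

theorem spectrum_real_charMatrix_subset (φ : G →* ℂ) :
    spectrum ℝ (charMatrix φ f) ⊆ spectrum ℝ ((coverGraph f).adjMatrix ℝ) := by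
  rw [← spectrum.preimage_algebraMap ℂ]
  exact (Set.preimage_mono (spectrum_charMatrix_subset hsym φ)).trans
    ((spectrum.preimage_algebraMap ℂ).trans_subset (SimpleGraph.spectrum_adjMatrix_subset _))

end coverGraph

namespace charMatrix

variable {ι G : Type*} [DecidableEq ι] [Group G] {f : ι → ι → G}

theorem isHermitian [Finite G] (hsym : ∀ u v, f v u = (f u v)⁻¹) (φ : G →* ℂ) :
    (charMatrix φ f).IsHermitian := by
  ext u v
  by_cases huv : u = v
  · simp [charMatrix, huv]
  · simp [charMatrix, huv, Ne.symm huv, ← Complex.inv_eq_conj (φ.norm_apply_eq_one _),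
      ← φ.apply_inv_eq_inv, ← hsym]

variable [Fintype ι] {R : Type*} [CommRing R]

theorem mul_self_apply_self (hsym : ∀ u v, f v u = (f u v)⁻¹) (φ : G →* R) (u : ι) :
    (charMatrix φ f * charMatrix φ f) u u = (Fintype.card ι - 1 : ℕ) := by
  have hterm : ∀ w, charMatrix φ f u w * charMatrix φ f w u = if w = u then 0 else 1 := by
    intro w
    by_cases h : w = u
    · simp [charMatrix, h]
    · simp [charMatrix, h, Ne.symm h, ← map_mul, hsym u w]
  simp [mul_apply, hterm, sum_ite, filter_ne', card_erase_of_mem]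

variable [Fintype G] [DecidableEq G]

theorem mul_self_apply_of_ne (φ : G →* R) {u v : ι} (huv : u ≠ v) :
    (charMatrix φ f * charMatrix φ f) u v = ∑ g, pathCount f u v g • φ g := by
  have hsupp : ∀ w ∈ univ, charMatrix φ f u w * charMatrix φ f w v ≠ 0 → w ≠ u ∧ w ≠ v := by
    intro w _ h
    constructor <;> rintro rfl <;> simp [charMatrix] at h
  rw [mul_apply, ← sum_filter_of_ne hsupp,
    ← sum_fiberwise_of_maps_to (g := fun w => f u w * f w v) fun _ _ => mem_univ _]
  refine sum_congr rfl fun g _ => ?_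
  rw [filter_filter, pathCount, ← sum_const]
  refine sum_congr (by simp only [and_assoc]) fun w hw => ?_
  obtain ⟨hwu, hwv, rfl⟩ : w ≠ u ∧ w ≠ v ∧ f u w * f w v = g := by simpa [and_assoc] using hw
  simp [charMatrix, Ne.symm hwu, hwv]

theorem mul_self_eq (hsym : ∀ u v, f v u = (f u v)⁻¹) (φ : G →* R) (hφ : ∑ g, φ g = 0)
    {l c : ℕ}
    (hl : ∀ u v, u ≠ v → pathCount f u v (f u v) = l)
    (hc : ∀ u v g, u ≠ v → g ≠ f u v → pathCount f u v g = c) :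
    charMatrix φ f * charMatrix φ f =
      ((l : R) - c) • charMatrix φ f + ((Fintype.card ι - 1 : ℕ) : R) • 1 := by
  ext u v
  by_cases huv : u = v
  · subst huv
    rw [mul_self_apply_self hsym φ]
    simp [charMatrix]
  · rw [mul_self_apply_of_ne φ huv, ← add_sum_erase _ _ (mem_univ (f u v)), hl u v huv,
      sum_congr rfl fun g hg => by rw [hc u v g huv (ne_of_mem_erase hg)], ← smul_sum,
      sum_erase_eq_sub (mem_univ _), hφ]
    simp [charMatrix, huv]
    ring

theorem sq_eq_of_mem_spectrum [Nonempty ι] (hsym : ∀ u v, f v u = (f u v)⁻¹) (φ : G →* ℂ)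
    (hφ : ∑ g, φ g = 0) {l c : ℕ}
    (hl : ∀ u v, u ≠ v → pathCount f u v (f u v) = l)
    (hc : ∀ u v g, u ≠ v → g ≠ f u v → pathCount f u v g = c) {μ : ℝ}
    (hμ : μ ∈ spectrum ℝ (charMatrix φ f)) :
    μ ^ 2 = ((l : ℝ) - c) * μ + (Fintype.card ι - 1) := by
  have hp : aeval (charMatrix φ f) (X ^ 2 - C ((l : ℝ) - c) * X - C ((Fintype.card ι : ℝ) - 1))
      = 0 := by
    simp only [map_sub, map_mul, aeval_C, aeval_X, sq, mul_self_eq hsym φ hφ hl hc,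
      Algebra.algebraMap_eq_smul_one, Nat.cast_sub Fintype.card_pos, sub_smul,
      Nat.cast_smul_eq_nsmul, sub_mul, smul_mul_assoc, one_mul, one_smul, Nat.cast_one]
    abel
  have := spectrum.isRoot_of_aeval_eq_zero hp hμ
  simp only [IsRoot, eval_sub, eval_mul, eval_pow, eval_X, eval_C] at this
  linarith

end charMatrix

/-- `IsDracknCover` does not record the diameter; the main theorem reads it off the spectrum. -/
structure IsDracknArcFunction {ι G : Type*} [Fintype ι] [Group G] [Fintype G]
    (f : ι → ι → G) (r c : ℕ) : Prop where
  inv_symm : ∀ u v, f v u = (f u v)⁻¹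
  isDracknCover : IsDracknCover (coverGraph f) Prod.fst r c
  dist_le_three : ∀ x y, (coverGraph f).Reachable x y → (coverGraph f).dist x y ≤ 3

namespace IsDracknArcFunction

variable {ι G : Type*} [Fintype ι] [Group G] [Fintype G] {f : ι → ι → G} {r c : ℕ}

theorem dist_eq_two (h : IsDracknArcFunction f r c) {u v : ι} (huv : u ≠ v) (a : G) {g : G}
    (hg : g ≠ f u v) : (coverGraph f).dist (u, a) (v, a * g) = 2 := by
  have hne : ((u, a) : ι × G) ≠ (v, a * g) := fun h => huv (congrArg Prod.fst h)
  have hreach : (coverGraph f).Reachable (u, a) (v, a * g) := by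
    have hfibre : (coverGraph f).dist (v, a * f u v) (v, a * g) = 3 :=
      (h.isDracknCover.2.2.2.1 _ _ fun h => hg (mul_left_cancel (congrArg Prod.snd h)).symm).mp rfl
    exact ((coverGraph.adj h.inv_symm).mpr ⟨huv, rfl⟩).reachable.trans
      (.of_dist_ne_zero (by omega))
  have h0 : (coverGraph f).dist (u, a) (v, a * g) ≠ 0 :=
    SimpleGraph.dist_ne_zero_iff_ne_and_reachable.mpr ⟨hne, hreach⟩
  have h1 : (coverGraph f).dist (u, a) (v, a * g) ≠ 1 := fun h1 =>
    hg (mul_left_cancel ((coverGraph.adj h.inv_symm).mp (SimpleGraph.dist_eq_one_iff_adj.mp h1)).2)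
  have h3 : (coverGraph f).dist (u, a) (v, a * g) ≠ 3 := fun h3 =>
    huv ((h.isDracknCover.2.2.2.1 _ _ hne).mpr h3)
  have := h.dist_le_three _ _ hreach
  omega

theorem cast_mul_pos [Nontrivial G] (h : IsDracknArcFunction f r c) (hG : Fintype.card G = r)
    (hι : 1 < Fintype.card ι) : (0 : ℝ) < r * c := by
  obtain ⟨u, v, huv⟩ := Fintype.exists_pair_of_one_lt_card hι
  obtain ⟨g, hg⟩ := exists_ne (f u v)
  have hd := h.dist_eq_two huv 1 hg
  have hreach := SimpleGraph.Reachable.of_dist_ne_zero (hd.symm ▸ two_ne_zero)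
  obtain ⟨w, hw⟩ := (SimpleGraph.edist_eq_two_iff.mp (by
    rw [← hreach.coe_dist_eq_edist, hd]; rfl)).2.2
  have hc : 0 < c := by
    rw [← h.isDracknCover.2.2.2.2 _ _ hd, Nat.card_pos_iff]
    exact ⟨⟨⟨w, hw⟩⟩, inferInstance⟩
  have hr : 0 < r := hG ▸ Fintype.card_pos
  positivity

variable [DecidableEq ι] [DecidableEq G]

theorem pathCount_eq_of_ne (h : IsDracknArcFunction f r c) {u v : ι} (huv : u ≠ v) {g : G}
    (hg : g ≠ f u v) : pathCount f u v g = c := by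
  have := h.isDracknCover.2.2.2.2 _ _ (h.dist_eq_two huv 1 hg)
  rwa [coverGraph.card_commonNeighbors h.inv_symm] at this

theorem pathCount_self_add (h : IsDracknArcFunction f r c) (hG : Fintype.card G = r) {u v : ι}
    (huv : u ≠ v) : pathCount f u v (f u v) + (r - 1) * c = Fintype.card ι - 2 := by
  rw [← coverGraph.sum_pathCount (f := f) huv, ← add_sum_erase _ _ (mem_univ (f u v)),
    sum_congr rfl fun g hg => h.pathCount_eq_of_ne huv (ne_of_mem_erase hg),
    sum_const, card_erase_of_mem (mem_univ _), card_univ, hG, smul_eq_mul]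

theorem pathCount_self_eq (h : IsDracknArcFunction f r c) (hG : Fintype.card G = r) {u v : ι}
    (huv : u ≠ v) : pathCount f u v (f u v) = Fintype.card ι - 2 - (r - 1) * c := by
  have := h.pathCount_self_add hG huv
  omega

theorem natCast_card_sub_two_sub (h : IsDracknArcFunction f r c) (hG : Fintype.card G = r)
    (hι : 1 < Fintype.card ι) :
    ((Fintype.card ι - 2 - (r - 1) * c : ℕ) : ℝ) = Fintype.card ι - 2 - (r - 1) * c := by
  obtain ⟨u, v, huv⟩ := Fintype.exists_pair_of_one_lt_card hι
  have := h.pathCount_self_add hG huv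
  have : 1 ≤ r := hG ▸ Fintype.card_pos
  rw [Nat.cast_sub (by omega), Nat.cast_sub (by omega), Nat.cast_mul, Nat.cast_sub this]
  push_cast
  ring

theorem sq_eq_of_mem_spectrum_charMatrix (h : IsDracknArcFunction f r c)
    (hG : Fintype.card G = r) (hι : 1 < Fintype.card ι) (φ : G →* ℂ) (hφ : φ ≠ 1) {μ : ℝ}
    (hμ : μ ∈ spectrum ℝ (charMatrix φ f)) :
    μ ^ 2 = (Fintype.card ι - 2 - r * c) * μ + (Fintype.card ι - 1) := by
  have : Nonempty ι := Fintype.card_pos_iff.mp (by omega)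
  have := charMatrix.sq_eq_of_mem_spectrum h.inv_symm φ (sum_hom_units_eq_zero φ hφ)
    (fun u v huv => h.pathCount_self_eq hG huv) (fun u v g huv hg => h.pathCount_eq_of_ne huv hg) hμ
  rw [h.natCast_card_sub_two_sub hG hι] at this
  linear_combination this

theorem eigenvalues_charMatrix_eq_or_eq [Nontrivial G] [DecidableRel (coverGraph f).Adj]
    (h : IsDracknArcFunction f r c) (hG : Fintype.card G = r) (hι : 1 < Fintype.card ι)
    (hA : ((coverGraph f).adjMatrix ℝ).IsHermitian) {θ τ : ℝ}
    (heig : ∀ v, hA.eigenvalues v ∈ ({(Fintype.card ι : ℝ) - 1, θ, -1, τ} : Finset ℝ))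
    (φ : G →* ℂ) (hφ : φ ≠ 1) (hM : (charMatrix φ f).IsHermitian) (i : ι) :
    hM.eigenvalues i = θ ∨ hM.eigenvalues i = τ := by
  have hμ := hM.eigenvalues_mem_spectrum_real i
  obtain ⟨v, hv⟩ : hM.eigenvalues i ∈ Set.range hA.eigenvalues := by
    rw [← hA.spectrum_real_eq_range_eigenvalues]
    exact coverGraph.spectrum_real_charMatrix_subset h.inv_symm φ hμ
  have hne := ne_sub_one_and_ne_neg_one_of_sq_eq (h.cast_mul_pos hG hι).ne'
    (by exact_mod_cast hι) (h.sq_eq_of_mem_spectrum_charMatrix hG hι φ hφ hμ)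
  have := heig v
  simp only [mem_insert, mem_singleton, hv] at this
  tauto

theorem natCard_eigenvalues_moments [Nontrivial G] [DecidableRel (coverGraph f).Adj]
    (h : IsDracknArcFunction f r c) (hG : Fintype.card G = r) (hι : 1 < Fintype.card ι)
    (hA : ((coverGraph f).adjMatrix ℝ).IsHermitian) {θ τ : ℝ} (hθτ : θ ≠ τ)
    (heig : ∀ v, hA.eigenvalues v ∈ ({(Fintype.card ι : ℝ) - 1, θ, -1, τ} : Finset ℝ))
    (hθ : θ ^ 2 = (Fintype.card ι - 2 - r * c) * θ + (Fintype.card ι - 1))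
    (hτ : τ ^ 2 = (Fintype.card ι - 2 - r * c) * τ + (Fintype.card ι - 1)) :
    (Nat.card {v // hA.eigenvalues v = θ} : ℝ) + Nat.card {v // hA.eigenvalues v = τ} =
        (r - 1) * Fintype.card ι ∧
      Nat.card {v // hA.eigenvalues v = θ} * θ + Nat.card {v // hA.eigenvalues v = τ} * τ = 0 := by
  have hN : (2 : ℝ) ≤ Fintype.card ι := by exact_mod_cast hι
  have hrc := (h.cast_mul_pos hG hι).ne'
  obtain ⟨hθ1, hθ2⟩ := ne_sub_one_and_ne_neg_one_of_sq_eq hrc hN hθ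
  obtain ⟨hτ1, hτ2⟩ := ne_sub_one_and_ne_neg_one_of_sq_eq hrc hN hτ
  have E : ∀ k, (Nat.card {v // hA.eigenvalues v = Fintype.card ι - 1} : ℝ) *
      (Fintype.card ι - 1) ^ k + Nat.card {v // hA.eigenvalues v = θ} * θ ^ k +
      Nat.card {v // hA.eigenvalues v = -1} * (-1) ^ k +
      Nat.card {v // hA.eigenvalues v = τ} * τ ^ k = ((coverGraph f).adjMatrix ℝ ^ k).trace := by
    intro k
    have hsplit := Fintype.sum_comp_eq_sum_natCard_mul heig (· ^ k)
    rw [sum_insert (by simp [hθ1.symm, hτ1.symm, show (Fintype.card ι : ℝ) - 1 ≠ -1 by linarith]),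
      sum_insert (by simp [hθ2, hθτ]), sum_insert (by simp [hτ2.symm]), sum_singleton] at hsplit
    rw [hA.trace_pow]
    simp only [RCLike.ofReal_real_eq_id, id] at hsplit ⊢
    rw [hsplit]
    ring
  have hl := fun u v (huv : u ≠ v) => h.pathCount_self_eq hG huv
  have hcast : ((Fintype.card ι - 1 : ℕ) : ℝ) = Fintype.card ι - 1 := by
    rw [Nat.cast_sub (by omega), Nat.cast_one]
  refine multiplicities_of_power_sums (a := Nat.card {v // hA.eigenvalues v = Fintype.card ι - 1})
    (b := Nat.card {v // hA.eigenvalues v = -1}) hθ hτ hrc (by nlinarith) ?_ ?_ ?_ ?_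
  · simpa [hG] using E 0
  · simpa using E 1
  · simpa [coverGraph.trace_adjMatrix_pow_two h.inv_symm, hcast, hG] using E 2
  · simpa [coverGraph.trace_adjMatrix_pow_three h.inv_symm hl, hcast, hG,
      h.natCast_card_sub_two_sub hG hι] using E 3

end IsDracknArcFunction

/-- **Lines from abelian drackns.** Let `X` be an abelian `(n,r,c)`-drackn
determined by a normalized arc function `f` with values in the abelian group
`G = ⟨f⟩` of order `r` (vertices `(u, a)`, with `(u,a) ~ (v,b)` iff `u ≠ v` and
`b = a * f u v`), with eigenvalues `n-1, θ, -1, τ` of multiplicities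
`1, m_θ, n-1, m_τ`.  If `φ` is a non-trivial linear character of `G`, then the
`n × n` matrix `A(K_n)^{φ(f)}`, with `(u,v)`-entry `φ(f u v)` for `u ≠ v` and
zero diagonal, is a Seidel matrix having exactly two distinct eigenvalues
`θ` and `τ`, with multiplicities `m_θ/(r-1)` and `m_τ/(r-1)` respectively. -/
theorem lines_from_abelian_drackn (n r c : ℕ) (hn : 2 ≤ n) (hr : 2 ≤ r)
    (G : Type*) [CommGroup G] [Fintype G] [DecidableEq G]
    (hG : Fintype.card G = r)
    (f : Fin n → Fin n → G)
    (hsym : ∀ u v, f v u = (f u v)⁻¹)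
    (X : SimpleGraph (Fin n × G)) [DecidableRel X.Adj]
    (hXdef : X = SimpleGraph.fromRel
      (fun x y : Fin n × G => x.1 ≠ y.1 ∧ y.2 = x.2 * f x.1 y.1))
    (hX : IsDracknCover X Prod.fst r c)
    (θ τ : ℝ) (hθpos : 0 < θ) (hτneg : τ < 0)
    (hA : (X.adjMatrix ℝ).IsHermitian)
    (heig : ∀ v, hA.eigenvalues v = (n : ℝ) - 1 ∨ hA.eigenvalues v = θ ∨
      hA.eigenvalues v = -1 ∨ hA.eigenvalues v = τ)
    (mθ mτ : ℕ)
    (hmθ : Nat.card {v // hA.eigenvalues v = θ} = mθ)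
    (hmτ : Nat.card {v // hA.eigenvalues v = τ} = mτ)
    (φ : G →* ℂ) (hφ : φ ≠ 1)
    (M : Matrix (Fin n) (Fin n) ℂ)
    (hM : M = Matrix.of fun u v : Fin n => if u = v then 0 else φ (f u v)) :
    ∃ hMh : M.IsHermitian,
      (∀ i, M i i = 0) ∧
      (∀ i j, i ≠ j → ‖M i j‖ = 1) ∧
      (∀ i, hMh.eigenvalues i = θ ∨ hMh.eigenvalues i = τ) ∧
      (∃ i, hMh.eigenvalues i = θ) ∧ (∃ i, hMh.eigenvalues i = τ) ∧
      (∃ kθ kτ : ℕ, mθ = (r - 1) * kθ ∧ mτ = (r - 1) * kτ ∧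
        Nat.card {i // hMh.eigenvalues i = θ} = kθ ∧
        Nat.card {i // hMh.eigenvalues i = τ} = kτ) := by
  obtain rfl : X = coverGraph f := hXdef
  obtain rfl : M = charMatrix φ f := hM
  have hι : 1 < Fintype.card (Fin n) := by rw [Fintype.card_fin]; omega
  have : Nontrivial G := Fintype.one_lt_card_iff_nontrivial.mp (by omega)
  have : Nonempty (Fin n) := ⟨⟨0, by omega⟩⟩
  have hS : ∀ v, hA.eigenvalues v ∈ ({(n : ℝ) - 1, θ, -1, τ} : Finset ℝ) := by simpa using heig
  have h : IsDracknArcFunction f r c := ⟨hsym, hX, fun x y hxy => Nat.le_of_lt_succ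
    ((SimpleGraph.dist_lt_card_of_eigenvalues_mem hA hS hxy).trans_le card_le_four)⟩
  have hMh := charMatrix.isHermitian hsym φ
  have hmem := h.eigenvalues_charMatrix_eq_or_eq hG hι hA (by simpa using hS) φ hφ hMh
  have hquad := fun i => h.sq_eq_of_mem_spectrum_charMatrix hG hι φ hφ
    (hMh.eigenvalues_mem_spectrum_real i)
  have htr : (charMatrix φ f).trace = 0 := by simp [trace, charMatrix]
  have hθτ : θ ≠ τ := (hτneg.trans hθpos).ne'
  obtain ⟨⟨iθ, hiθ⟩, ⟨iτ, hiτ⟩⟩ := hMh.exists_eigenvalues_eq_of_trace_eq_zero hmem htr hθpos hτneg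
  obtain ⟨hk0, hk1⟩ := hMh.natCard_eigenvalues_of_trace_eq_zero hmem htr hθτ
  obtain ⟨hm0, hm1⟩ := h.natCard_eigenvalues_moments hG hι hA hθτ (by simpa using hS)
    (hiθ ▸ hquad iθ) (hiτ ▸ hquad iτ)
  have hr1 : ((r - 1 : ℕ) : ℝ) = r - 1 := by rw [Nat.cast_sub (by omega), Nat.cast_one]
  rw [hmθ, hmτ, ← hr1] at hm0
  rw [hmθ, hmτ] at hm1
  obtain ⟨hθm, hτm⟩ := eq_mul_of_moments hθτ hk0 hk1 hm0 hm1
  exact ⟨hMh, fun i => by simp [charMatrix], fun i j hij => by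
    simp [charMatrix, hij, MonoidHom.norm_apply_eq_one], hmem, ⟨iθ, hiθ⟩, ⟨iτ, hiτ⟩, _, _,
    by exact_mod_cast hθm, by exact_mod_cast hτm, rfl, rfl⟩
end

section
/- Let p be a prime, V and U vector spaces over GF(p) of dimensions m and s, and B: V×V → U a GF(p)-bilinear alternating form such that for each nonzero a ∈ V the map v ↦ B(a,v) is surjective onto U. Define a graph X(B) on vertex set V×U by (v,a) ~ (w,b) iff (v,a) ≠ (w,b) and B(v,w) = a − b. Then X(B) is an antipodal distance-regular p^s-fold cover of K_{p^m} in which any two vertices at distance 2 have exactly p^{m−s} common neighbours. -/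
/-!
Adjacency `(v, a) ~ (w, b)` forces `v ≠ w` and `b = a - B(v, w)`, so every vertex has exactly one
neighbour in each other fibre. A common neighbour `(x, c)` of `u` and `w` satisfies
`B(u₁ - w₁, x) = u₂ - w₂` (then `c = u₂ - B(u₁, x)`), and conversely every solution `x` gives
one, because the solutions `x = u₁` and `x = w₁` occur only when `u ~ w`. Hence two vertices of
one fibre have no common neighbour, while two non-adjacent vertices of different fibres have as
many as the fibre of the surjective map `B(u₁ - w₁)`, namely `p ^ (m - s)`; walking to any
neighbour of `u` and then on to `w` gives distance `3` inside a fibre.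
-/

theorem SimpleGraph.dist_eq_two_iff {V : Type*} {G : SimpleGraph V} {u v : V} :
    G.dist u v = 2 ↔ u ≠ v ∧ ¬G.Adj u v ∧ (G.commonNeighbors u v).Nonempty := by
  rw [SimpleGraph.dist, ENat.toNat_eq_iff two_ne_zero, Nat.cast_ofNat, edist_eq_two_iff]

theorem SimpleGraph.dist_eq_three_of_walk {V : Type*} {G : SimpleGraph V} {u v : V}
    (p : G.Walk u v) (hp : p.length = 3) (hne : u ≠ v) (hnadj : ¬G.Adj u v)
    (hcommon : G.commonNeighbors u v = ∅) : G.dist u v = 3 := by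
  have h0 : G.dist u v ≠ 0 := dist_ne_zero_iff_ne_and_reachable.2 ⟨hne, p.reachable⟩
  have h1 : G.dist u v ≠ 1 := by rwa [Ne, dist_eq_one_iff_adj]
  have h2 : G.dist u v ≠ 2 := by simp [dist_eq_two_iff, hcommon]
  have h3 := hp ▸ dist_le p
  omega

theorem LinearMap.natCard_fiber_of_surjective {K V W : Type*} [Field K]
    [AddCommGroup V] [Module K V] [Module.Finite K V] [AddCommGroup W] [Module K W]
    (L : V →ₗ[K] W) (hL : Function.Surjective L) (t : W) :
    Nat.card {x // L x = t} = Nat.card K ^ (Module.finrank K V - Module.finrank K W) := by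
  obtain ⟨x₀, rfl⟩ := hL t
  have hker : Module.finrank K (ker L) = Module.finrank K V - Module.finrank K W := by
    have := finrank_range_add_finrank_ker L
    rw [range_eq_top.2 hL, finrank_top] at this
    omega
  rw [← hker, ← Module.natCard_eq_pow_finrank]
  exact Nat.card_congr <| Equiv.subtypeEquiv (Equiv.subRight x₀) fun x => by
    simp [sub_eq_zero]

namespace SymplecticCover

section

variable {R V U : Type*} [CommSemiring R] [AddCommGroup V] [Module R V]
  [AddCommGroup U] [Module R U]

def graph (B : V →ₗ[R] V →ₗ[R] U) : SimpleGraph (V × U) :=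
  SimpleGraph.fromRel fun x y => B x.1 y.1 = x.2 - y.2

variable {B : V →ₗ[R] V →ₗ[R] U}

theorem graph_adj (H : B.IsAlt) {x y : V × U} :
    (graph B).Adj x y ↔ x.1 ≠ y.1 ∧ B x.1 y.1 = x.2 - y.2 := by
  have hsymm : B y.1 x.1 = y.2 - x.2 ↔ B x.1 y.1 = x.2 - y.2 := by
    rw [← H.neg, neg_eq_iff_eq_neg, neg_sub]
  rw [graph, SimpleGraph.fromRel_adj, hsymm, or_self]
  constructor
  · rintro ⟨hne, h⟩
    refine ⟨fun h₁ => hne (Prod.ext h₁ ?_), h⟩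
    rw [h₁, H.self_eq_zero, eq_comm, sub_eq_zero] at h
    exact h
  · rintro ⟨hne, h⟩
    exact ⟨fun h' => hne (congrArg Prod.fst h'), h⟩

theorem adj_mk (H : B.IsAlt) {x : V × U} {v : V} (hv : x.1 ≠ v) :
    (graph B).Adj x (v, x.2 - B x.1 v) :=
  (graph_adj H).2 ⟨hv, (sub_sub_cancel _ _).symm⟩

theorem existsUnique_adj (H : B.IsAlt) {x : V × U} {v : V} (hv : x.1 ≠ v) :
    ∃! y : V × U, y.1 = v ∧ (graph B).Adj x y := by
  refine ⟨_, ⟨rfl, adj_mk H hv⟩, ?_⟩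
  rintro y ⟨rfl, hy⟩
  rw [graph_adj H] at hy
  exact Prod.ext rfl (by rw [hy.2, sub_sub_cancel])

theorem apply_sub_eq_of_mem_commonNeighbors (H : B.IsAlt) {u w y : V × U}
    (hy : y ∈ (graph B).commonNeighbors u w) : B (u.1 - w.1) y.1 = u.2 - w.2 := by
  obtain ⟨hu, hw⟩ := (graph B).mem_commonNeighbors.1 hy
  rw [map_sub, LinearMap.sub_apply, ((graph_adj H).1 hu).2, ((graph_adj H).1 hw).2]
  abel

theorem commonNeighbors_eq_empty_of_fst_eq (H : B.IsAlt) {u w : V × U} (hne : u ≠ w)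
    (h : u.1 = w.1) : (graph B).commonNeighbors u w = ∅ := by
  refine Set.eq_empty_of_forall_notMem fun y hy => hne (Prod.ext h ?_)
  have := apply_sub_eq_of_mem_commonNeighbors H hy
  rwa [h, sub_self, map_zero, LinearMap.zero_apply, eq_comm, sub_eq_zero] at this

def commonNeighborsEquiv (H : B.IsAlt) {u w : V × U} (hne : u.1 ≠ w.1)
    (hnadj : ¬(graph B).Adj u w) :
    (graph B).commonNeighbors u w ≃ {x : V // B (u.1 - w.1) x = u.2 - w.2} where
  toFun y := ⟨y.1.1, apply_sub_eq_of_mem_commonNeighbors H y.2⟩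
  invFun x := ⟨(x.1, u.2 - B u.1 x.1), by
    obtain ⟨x, hx⟩ := x
    have hBuw : B u.1 w.1 ≠ u.2 - w.2 := fun h => hnadj ((graph_adj H).2 ⟨hne, h⟩)
    have hxu : u.1 ≠ x := by
      rintro rfl
      rw [map_sub, LinearMap.sub_apply, H.self_eq_zero, zero_sub, H.neg] at hx
      exact hBuw hx
    have hxw : w.1 ≠ x := by
      rintro rfl
      rw [map_sub, LinearMap.sub_apply, H.self_eq_zero, sub_zero] at hx
      exact hBuw hx
    refine (graph B).mem_commonNeighbors.2 ⟨adj_mk H hxu, (graph_adj H).2 ⟨hxw, ?_⟩⟩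
    rw [map_sub, LinearMap.sub_apply, sub_eq_iff_eq_add] at hx
    show B w.1 x = w.2 - (u.2 - B u.1 x)
    rw [hx]
    abel⟩
  left_inv y := by
    obtain ⟨y, hy⟩ := y
    have := ((graph_adj H).1 ((graph B).mem_commonNeighbors.1 hy).1).2
    ext <;> simp [this]
  right_inv x := rfl

theorem commonNeighbors_nonempty (H : B.IsAlt)
    (hsurj : ∀ a : V, a ≠ 0 → Function.Surjective (B a)) {u w : V × U} (hne : u.1 ≠ w.1)
    (hnadj : ¬(graph B).Adj u w) : ((graph B).commonNeighbors u w).Nonempty := by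
  obtain ⟨x, hx⟩ := hsurj _ (sub_ne_zero.2 hne) (u.2 - w.2)
  exact ⟨_, ((commonNeighborsEquiv H hne hnadj).symm ⟨x, hx⟩).2⟩

theorem fst_eq_iff_dist_eq_three [Nontrivial V] (H : B.IsAlt)
    (hsurj : ∀ a : V, a ≠ 0 → Function.Surjective (B a)) {u w : V × U} (hne : u ≠ w) :
    u.1 = w.1 ↔ (graph B).dist u w = 3 := by
  constructor
  · intro h
    have hcommon := commonNeighbors_eq_empty_of_fst_eq H hne h
    obtain ⟨v, hv⟩ := exists_ne u.1
    have hux := adj_mk H hv.symm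
    have hxw : ¬(graph B).Adj (v, u.2 - B u.1 v) w := fun hxw =>
      hcommon.subset ((graph B).mem_commonNeighbors.2 ⟨hux, hxw.symm⟩)
    obtain ⟨y, hy⟩ := commonNeighbors_nonempty H hsurj (h ▸ hv) hxw
    rw [SimpleGraph.mem_commonNeighbors] at hy
    exact SimpleGraph.dist_eq_three_of_walk (.cons hux (.cons hy.1 (.cons hy.2.symm .nil))) rfl
      hne (fun huw => ((graph_adj H).1 huw).1 h) hcommon
  · intro h3
    by_contra h
    by_cases hadj : (graph B).Adj u w
    · rw [← SimpleGraph.dist_eq_one_iff_adj] at hadj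
      omega
    · have h2 := SimpleGraph.dist_eq_two_iff.2 ⟨hne, hadj, commonNeighbors_nonempty H hsurj h hadj⟩
      omega

end

theorem natCard_commonNeighbors_of_dist_eq_two {K V U : Type*} [Field K]
    [AddCommGroup V] [Module K V] [Module.Finite K V] [AddCommGroup U] [Module K U]
    {B : V →ₗ[K] V →ₗ[K] U} (H : B.IsAlt) (hsurj : ∀ a : V, a ≠ 0 → Function.Surjective (B a))
    {u w : V × U} (h : (graph B).dist u w = 2) :
    Nat.card ((graph B).commonNeighbors u w) =
      Nat.card K ^ (Module.finrank K V - Module.finrank K U) := by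
  obtain ⟨hne, hnadj, hcommon⟩ := SimpleGraph.dist_eq_two_iff.1 h
  have hfst : u.1 ≠ w.1 := fun h' =>
    hcommon.ne_empty (commonNeighbors_eq_empty_of_fst_eq H hne h')
  rw [Nat.card_congr (commonNeighborsEquiv H hfst hnadj),
    LinearMap.natCard_fiber_of_surjective _ (hsurj _ (sub_ne_zero.2 hfst))]

end SymplecticCover

open SymplecticCover in
/-- **Symplectic (Thas–Somma) covers.** Let `p` be a prime, `V`, `U` vector
spaces over `GF(p)` of dimensions `m`, `s`, and `B : V × V → U` a bilinear
alternating form such that `B(a, ·)` is surjective for each `a ≠ 0`.  The graph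
`X(B)` on `V × U`, with `(v,a) ~ (w,b)` iff `(v,a) ≠ (w,b)` and
`B(v,w) = a - b`, is a distance-regular antipodal `p^s`-fold cover of
`K_{p^m}` (fibres `{v} × U`) in which any two vertices at distance `2` have
exactly `p^(m-s)` common neighbours. -/
theorem symplectic_cover_is_drackn (p : ℕ) [Fact p.Prime] (m s : ℕ)
    (hs : 1 ≤ s) (hms : s ≤ m)
    (V U : Type*) [AddCommGroup V] [Module (ZMod p) V] [Fintype V]
    [AddCommGroup U] [Module (ZMod p) U] [Fintype U]
    (hV : Module.finrank (ZMod p) V = m) (hU : Module.finrank (ZMod p) U = s)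
    (B : V →ₗ[ZMod p] V →ₗ[ZMod p] U)
    (halt : ∀ v, B v v = 0)
    (hsurj : ∀ a : V, a ≠ 0 → Function.Surjective (B a)) :
    Fintype.card V = p ^ m ∧
    IsDracknCover
      (SimpleGraph.fromRel fun x y : V × U => B x.1 y.1 = x.2 - y.2)
      Prod.fst (p ^ s) (p ^ (m - s)) := by
  have H : B.IsAlt := halt
  have : Nontrivial V := Module.nontrivial_of_finrank_pos (R := ZMod p) (by omega)
  refine ⟨by rw [Module.card_eq_pow_finrank (K := ZMod p), ZMod.card, hV], fun i => ?_,
    fun u w h => ((graph_adj H).1 h).1, fun u i hi => existsUnique_adj H hi,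
    fun u w hne => fst_eq_iff_dist_eq_three H hsurj hne, fun u w h => ?_⟩
  · rw [Nat.card_congr (Equiv.prodSubtypeFstEquivSubtypeProd (p := (· = i))), Nat.card_prod,
      Nat.card_unique, one_mul, Module.natCard_eq_pow_finrank (K := ZMod p), Nat.card_zmod, hU]
  · have hcount := natCard_commonNeighbors_of_dist_eq_two H hsurj h
    rwa [Nat.card_zmod, hV, hU] at hcount
end

section
/- If X is an abelian (n,r,c)-drackn, then every odd prime dividing r also divides n. -/
open Finset SimpleGraph

theorem exists_addMonoidHom_zmod_ne_zero {A : Type*} [AddCommGroup A] [Finite A] {p : ℕ}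
    [Fact p.Prime] (hp : p ∣ Nat.card A) : ∃ φ : A →+ ZMod p, φ ≠ 0 := by
  obtain ⟨a, ha⟩ := exists_prime_addOrderOf_dvd_card' p hp
  have hns : ¬Function.Surjective fun x : A => p • x := fun hs => by
    have ha0 : a = 0 := Finite.injective_iff_surjective.mpr hs <| by
      simp only [← ha, addOrderOf_nsmul_eq_zero, smul_zero]
    rw [ha0, addOrderOf_zero] at ha
    exact (Fact.out : p.Prime).one_lt.ne ha
  obtain ⟨b, hb⟩ := not_forall.mp hns
  have hb0 : ModN.mkQ p b ≠ 0 := by simpa [ModN.mkQ] using hb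
  obtain ⟨ℓ, hℓ⟩ := Module.Projective.exists_dual_ne_zero (ZMod p) hb0
  exact ⟨ℓ.toAddMonoidHom.comp (ModN.mkQ p), fun h => hℓ (DFunLike.congr_fun h b)⟩

namespace SimpleGraph

variable {W : Type*} {X : SimpleGraph W} {x y : W}

theorem dist_eq_two_of_adj_adj (hxy : x ≠ y) (hn : ¬X.Adj x y) {z : W} (hxz : X.Adj x z)
    (hzy : X.Adj z y) : X.dist x y = 2 := by
  have : X.edist x y = 2 := edist_eq_two_iff.mpr ⟨hxy, hn, z, hxz, hzy.symm⟩
  simp [dist, this]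

theorem adj_or_commonNeighbors_nonempty_of_dist_ne_three (hxy : x ≠ y) (p : X.Walk x y)
    (hp : p.length ≤ 3) (h3 : X.dist x y ≠ 3) :
    X.Adj x y ∨ (X.commonNeighbors x y).Nonempty := by
  by_contra! h
  have hlt : 2 < X.edist x y := two_lt_edist_iff.mpr ⟨hxy, h.1, h.2⟩
  have hle : X.edist x y ≤ 3 := p.edist_le.trans (by exact_mod_cast hp)
  have : X.edist x y = 3 := le_antisymm hle (Order.add_one_le_of_lt hlt)
  exact h3 (by simp [dist, this])

theorem exists_adj_adj_adj_of_dist_eq_three (h : X.dist x y = 3) :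
    ∃ a b, X.Adj x a ∧ X.Adj a b ∧ X.Adj b y := by
  obtain ⟨p, hp⟩ := exists_walk_of_dist_ne_zero (h ▸ three_ne_zero)
  rw [h] at hp
  refine ⟨p.getVert 1, p.getVert 2, ?_, p.adj_getVert_succ (by omega), ?_⟩
  · simpa using p.adj_getVert_succ (i := 0) (by omega)
  · simpa [← hp] using p.adj_getVert_succ (i := 2) (by omega)

end SimpleGraph

namespace Drackn

variable {V G : Type*} [Group G]

section AdditiveFunction

variable {K : Type*} {φ : G → K}

theorem map_one_of_map_mul [AddGroup K] (hφ : ∀ a b, φ (a * b) = φ a + φ b) : φ 1 = 0 := by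
  simpa using hφ 1 1

theorem map_inv_of_map_mul [AddGroup K] (hφ : ∀ a b, φ (a * b) = φ a + φ b) (g : G) :
    φ g⁻¹ = -φ g :=
  eq_neg_of_add_eq_zero_left (by rw [← hφ, inv_mul_cancel, map_one_of_map_mul hφ])

theorem sum_eq_zero_of_map_mul [Fintype G] [Field K] (h2 : (2 : K) ≠ 0)
    (hφ : ∀ a b, φ (a * b) = φ a + φ b) : ∑ g, φ g = 0 := by
  have h : ∑ g, φ g⁻¹ = -∑ g, φ g := by
    rw [← sum_neg_distrib]
    exact sum_congr rfl fun g _ => map_inv_of_map_mul hφ g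
  rw [Fintype.sum_equiv (Equiv.inv G) (fun g => φ g⁻¹) φ fun _ => rfl] at h
  exact (mul_eq_zero.mp (by linear_combination h : (2 : K) * ∑ g, φ g = 0)).resolve_left h2

end AdditiveFunction

def arcCover (f : V → V → G) : SimpleGraph (V × G) :=
  SimpleGraph.fromRel fun x y => x.1 ≠ y.1 ∧ y.2 = x.2 * f x.1 y.1

variable {f : V → V → G}

theorem arcCover_adj (hsym : ∀ u v, f v u = (f u v)⁻¹) {u v : V} {a b : G} :
    (arcCover f).Adj (u, a) (v, b) ↔ u ≠ v ∧ b = a * f u v := by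
  simp only [arcCover, fromRel_adj, ne_eq, Prod.mk.injEq]
  constructor
  · rintro ⟨-, ⟨huv, rfl⟩ | ⟨hvu, rfl⟩⟩
    · exact ⟨huv, rfl⟩
    · exact ⟨Ne.symm hvu, by rw [hsym]; group⟩
  · rintro ⟨huv, rfl⟩
    exact ⟨fun h => huv h.1, Or.inl ⟨huv, rfl⟩⟩

variable [Fintype V] [DecidableEq V] [DecidableEq G]

def twoPathCount (f : V → V → G) (u v : V) (g : G) : ℕ :=
  #{w ∈ ({u, v} : Finset V)ᶜ | f u w * f w v = g}

theorem commonNeighbors_arcCover (hsym : ∀ u v, f v u = (f u v)⁻¹) (u v : V) (g : G) :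
    (arcCover f).commonNeighbors (u, 1) (v, g) =
      (fun w => (w, f u w)) '' ↑({w ∈ ({u, v} : Finset V)ᶜ | f u w * f w v = g}) := by
  ext ⟨w, s⟩
  simp only [mem_commonNeighbors, arcCover_adj hsym, one_mul, coe_filter, mem_compl,
    mem_insert, mem_singleton, not_or, Set.mem_image, Prod.mk.injEq]
  constructor
  · rintro ⟨⟨hu, rfl⟩, hv, hs⟩
    refine ⟨w, ⟨⟨Ne.symm hu, Ne.symm hv⟩, ?_⟩, rfl, rfl⟩
    rw [hs, hsym v w]; group
  · rintro ⟨w, ⟨⟨hu, hv⟩, rfl⟩, rfl, rfl⟩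
    exact ⟨⟨Ne.symm hu, rfl⟩, Ne.symm hv, by rw [hsym v w]; group⟩

theorem natCard_commonNeighbors_arcCover (hsym : ∀ u v, f v u = (f u v)⁻¹) (u v : V) (g : G) :
    Nat.card ((arcCover f).commonNeighbors (u, 1) (v, g)) = twoPathCount f u v g := by
  rw [commonNeighbors_arcCover hsym,
    Nat.card_image_of_injective (fun _ _ h => congrArg Prod.fst h), Nat.card_coe_set_eq,
    Set.ncard_coe_finset]
  rfl

theorem commonNeighbors_arcCover_nonempty_iff (hsym : ∀ u v, f v u = (f u v)⁻¹) (u v : V)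
    (g : G) :
    ((arcCover f).commonNeighbors (u, 1) (v, g)).Nonempty ↔ twoPathCount f u v g ≠ 0 := by
  rw [commonNeighbors_arcCover hsym, Set.image_nonempty, coe_nonempty, twoPathCount, card_ne_zero]

theorem twoPathCount_ne_zero_iff {u v : V} {g : G} :
    twoPathCount f u v g ≠ 0 ↔ ∃ w, w ≠ u ∧ w ≠ v ∧ f u w * f w v = g := by
  simp [twoPathCount]

variable [Fintype G]

theorem sum_twoPathCount_mul {K : Type*} [CommSemiring K] (F : G → K) (u v : V) :
    ∑ g, (twoPathCount f u v g : K) * F g =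
      ∑ w ∈ ({u, v} : Finset V)ᶜ, F (f u w * f w v) := by
  rw [← sum_fiberwise_of_maps_to (g := fun w => f u w * f w v) (t := univ) fun _ _ => mem_univ _]
  refine sum_congr rfl fun g _ => ?_
  rw [sum_congr rfl fun w hw => by rw [(mem_filter.mp hw).2], sum_const, nsmul_eq_mul]
  rfl

def farSet (f : V → V → G) (u v : V) : Finset G :=
  {g | g ≠ f u v ∧ twoPathCount f u v g = 0}

theorem mem_farSet {u v : V} {g : G} :
    g ∈ farSet f u v ↔ g ≠ f u v ∧ ∀ w, w ≠ u → w ≠ v → f u w * f w v ≠ g := by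
  simp [farSet, ← not_iff_not (a := twoPathCount f u v g = 0), twoPathCount_ne_zero_iff]

theorem inv_mem_farSet_iff (hsym : ∀ u v, f v u = (f u v)⁻¹) {u v : V} {g : G} :
    g⁻¹ ∈ farSet f v u ↔ g ∈ farSet f u v := by
  have key (w : V) : f v w * f w u = (f u w * f w v)⁻¹ := by rw [hsym w v, hsym u w]; group
  simp only [mem_farSet, hsym u v, key, ne_eq, inv_inj]
  exact and_congr Iff.rfl ⟨fun h w hu hv => h w hv hu, fun h w hv hu => h w hu hv⟩

theorem card_farSet_swap (hsym : ∀ u v, f v u = (f u v)⁻¹) (u v : V) :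
    #(farSet f v u) = #(farSet f u v) :=
  (card_equiv (Equiv.inv G) fun _ => (inv_mem_farSet_iff hsym).symm).symm

def farSum {K : Type*} [AddCommMonoid K] (φ : G → K) (f : V → V → G) (u v : V) : K :=
  ∑ g ∈ farSet f u v, φ g

theorem farSum_swap {K : Type*} [AddCommGroup K] {φ : G → K}
    (hφ : ∀ a b, φ (a * b) = φ a + φ b) (hsym : ∀ u v, f v u = (f u v)⁻¹) (u v : V) :
    farSum φ f v u = -farSum φ f u v := by
  rw [farSum, farSum, ← sum_equiv (Equiv.inv G) (f := fun g => φ g⁻¹)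
    (fun _ => (inv_mem_farSet_iff hsym).symm) fun _ _ => rfl, ← sum_neg_distrib]
  exact sum_congr rfl fun g _ => map_inv_of_map_mul hφ g

structure IsDracknArcFunction (f : V → V → G) (c : ℕ) : Prop where
  symm : ∀ u v, f v u = (f u v)⁻¹
  twoPathCount_eq : ∀ {u v g}, u ≠ v → g ≠ f u v → twoPathCount f u v g ≠ 0 →
    twoPathCount f u v g = c
  path_notMem_farSet : ∀ {u v w z}, u ≠ v → w ≠ u → z ≠ w → z ≠ v →
    f u w * f w z * f z v ∉ farSet f u v
  exists_triangle : ∀ u {h}, h ≠ 1 →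
    ∃ w z, w ≠ u ∧ z ≠ u ∧ z ≠ w ∧ f u w * f w z * f z u = h

theorem twoPathCount_eq_of_isDracknCover {r c : ℕ} (hsym : ∀ u v, f v u = (f u v)⁻¹)
    (hX : IsDracknCover (arcCover f) Prod.fst r c) {u v : V} {g : G}
    (huv : u ≠ v) (hg : g ≠ f u v) (hpos : twoPathCount f u v g ≠ 0) :
    twoPathCount f u v g = c := by
  obtain ⟨⟨w, s⟩, hw⟩ := (commonNeighbors_arcCover_nonempty_iff hsym u v g).mpr hpos
  rw [mem_commonNeighbors] at hw
  have hdist : (arcCover f).dist (u, 1) (v, g) = 2 := by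
    refine dist_eq_two_of_adj_adj (by simp [huv]) ?_ hw.1 hw.2.symm
    rw [arcCover_adj hsym, one_mul]
    exact fun h => hg h.2
  rw [← natCard_commonNeighbors_arcCover hsym]
  exact hX.2.2.2.2 _ _ hdist

theorem path_notMem_farSet_of_isDracknCover {r c : ℕ} (hsym : ∀ u v, f v u = (f u v)⁻¹)
    (hX : IsDracknCover (arcCover f) Prod.fst r c)
    {u v w z : V} (huv : u ≠ v) (hwu : w ≠ u) (hzw : z ≠ w) (hzv : z ≠ v) :
    f u w * f w z * f z v ∉ farSet f u v := by
  have adj {x y : V} (a : G) (hxy : x ≠ y) : (arcCover f).Adj (x, a) (y, a * f x y) :=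
    (arcCover_adj hsym).mpr ⟨hxy, rfl⟩
  have h3 : (arcCover f).dist (u, 1) (v, f u w * f w z * f z v) ≠ 3 :=
    fun h => huv ((hX.2.2.2.1 _ _ (by simp [huv])).mpr h)
  simp only [farSet, mem_filter, mem_univ, true_and, not_and_or, not_not,
    ← commonNeighbors_arcCover_nonempty_iff hsym]
  rcases adj_or_commonNeighbors_nonempty_of_dist_ne_three (by simp [huv])
    (.cons (by simpa using adj 1 hwu.symm) (.cons (adj _ hzw.symm) (.cons (adj _ hzv) .nil)))
    le_rfl h3 with h | h
  · left
    rw [((arcCover_adj hsym).mp h).2, one_mul]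
  · exact Or.inr h

omit [DecidableEq V] [DecidableEq G] in
theorem exists_triangle_of_isDracknCover {r c : ℕ}
    (hsym : ∀ u v, f v u = (f u v)⁻¹) (hX : IsDracknCover (arcCover f) Prod.fst r c)
    (u : V) {h : G} (h1 : h ≠ 1) :
    ∃ w z, w ≠ u ∧ z ≠ u ∧ z ≠ w ∧ f u w * f w z * f z u = h := by
  obtain ⟨⟨w, s⟩, ⟨z, t⟩, ha, hb, hc⟩ := exists_adj_adj_adj_of_dist_eq_three
    ((hX.2.2.2.1 (u, 1) (u, h) (by simpa using h1.symm)).mp rfl)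
  rw [arcCover_adj hsym] at ha hb hc
  refine ⟨w, z, ha.1.symm, hc.1, hb.1.symm, ?_⟩
  rw [hc.2, hb.2, ha.2, one_mul]

theorem isDracknArcFunction_of_isDracknCover {r c : ℕ} (hsym : ∀ u v, f v u = (f u v)⁻¹)
    (hX : IsDracknCover (arcCover f) Prod.fst r c) : IsDracknArcFunction f c :=
  ⟨hsym, twoPathCount_eq_of_isDracknCover hsym hX,
    path_notMem_farSet_of_isDracknCover hsym hX, exists_triangle_of_isDracknCover hsym hX⟩

namespace IsDracknArcFunction

variable {c : ℕ} (hf : IsDracknArcFunction f c) {u v w : V}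
include hf

theorem mul_left_mem_farSet_iff (huv : u ≠ v) (hwu : w ≠ u) (hwv : w ≠ v) {g : G} :
    f w u * g ∈ farSet f w v ↔ g ∈ farSet f u v := by
  have mem {u w : V} (huv : u ≠ v) (hwu : w ≠ u) (hwv : w ≠ v) {g : G}
      (hg : g ∈ farSet f u v) : f w u * g ∈ farSet f w v := by
    have cancel (x : G) (h : f w u * g = x) : g = f u w * x := by
      rw [← h, hf.symm u w]; group
    refine mem_farSet.mpr ⟨fun h => ?_, fun z hzw hzv h => ?_⟩
    · exact (mem_farSet.mp hg).2 w hwu hwv (cancel _ h).symm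
    · refine hf.path_notMem_farSet huv hwu hzw hzv ?_
      rwa [mul_assoc, ← cancel _ h.symm]
  refine ⟨fun hg => ?_, mem huv hwu hwv⟩
  simpa [hf.symm u w] using mem hwv hwu.symm huv hg

theorem card_farSet_left (huv : u ≠ v) (hwv : w ≠ v) :
    #(farSet f w v) = #(farSet f u v) := by
  rcases eq_or_ne w u with rfl | hwu
  · rfl
  · exact (card_equiv (Equiv.mulLeft (f w u))
      fun _ => (hf.mul_left_mem_farSet_iff huv hwu hwv).symm).symm

theorem card_farSet_right (huv : u ≠ v) (huw : u ≠ w) :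
    #(farSet f u w) = #(farSet f u v) := by
  rw [card_farSet_swap hf.symm, ← hf.card_farSet_left huw.symm huv.symm, card_farSet_swap hf.symm]

theorem card_farSet_eq (huv : u ≠ v) {x y : V} (hxy : x ≠ y) :
    #(farSet f x y) = #(farSet f u v) := by
  rcases eq_or_ne x v with rfl | hxv
  · rw [hf.card_farSet_right huv.symm hxy, card_farSet_swap hf.symm]
  · rw [hf.card_farSet_right hxv hxy, hf.card_farSet_left huv hxv]

theorem card_group_le (u : V) :
    Fintype.card G ≤ (Fintype.card V - 1) * (Fintype.card V - 2) + 1 := by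
  have hsub : (univ : Finset G) ⊆
      insert 1 ((univ.erase u).offDiag.image fun q => f u q.1 * f q.1 q.2 * f q.2 u) := by
    intro h _
    rcases eq_or_ne h 1 with rfl | h1
    · exact mem_insert_self _ _
    obtain ⟨w, z, hwu, hzu, hzw, rfl⟩ := hf.exists_triangle u h1
    exact mem_insert_of_mem (mem_image.mpr ⟨(w, z), by simp [hwu, hzu, hzw.symm], rfl⟩)
  calc Fintype.card G = #(univ : Finset G) := rfl
    _ ≤ #(univ.erase u).offDiag + 1 := (card_le_card hsub).trans (card_insert_le _ _) |>.trans
        (Nat.add_le_add_right card_image_le 1)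
    _ = (Fintype.card V - 1) * (Fintype.card V - 2) + 1 := by
        rw [offDiag_card, card_erase_of_mem (mem_univ u), card_univ, ← Nat.mul_sub_one,
          Nat.sub_sub]

theorem sum_twoPathCount_mul_eq {K : Type*} [CommRing K] (huv : u ≠ v) (F : G → K) :
    ∑ g, (twoPathCount f u v g : K) * F g = c * ∑ g, F g - c * ∑ g ∈ farSet f u v, F g +
      ((twoPathCount f u v (f u v) : K) - c) * F (f u v) := by
  have pointwise (g : G) : (twoPathCount f u v g : K) * F g = c * F g -
      (if g ∈ farSet f u v then c * F g else 0) +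
      (if g = f u v then ((twoPathCount f u v (f u v) : K) - c) * F g else 0) := by
    by_cases hg : g = f u v
    · subst hg
      rw [if_neg fun h => (mem_farSet.mp h).1 rfl, if_pos rfl]
      ring
    by_cases hfar : g ∈ farSet f u v
    · simp [hg, hfar, (mem_filter.mp hfar).2.2]
    · have hpos : twoPathCount f u v g ≠ 0 := fun h => hfar (by simp [farSet, hg, h])
      simp [hg, hfar, hf.twoPathCount_eq huv hg hpos]
  simp only [pointwise, sum_add_distrib, sum_sub_distrib, ← mul_sum, sum_ite_mem, univ_inter,
    sum_ite_eq', mem_univ, if_true]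

section AdditiveFunction

variable {K : Type*} [Field K] {φ : G → K} (hφ : ∀ a b, φ (a * b) = φ a + φ b)
include hφ

theorem farSum_left (huv : u ≠ v) (hwu : w ≠ u) (hwv : w ≠ v) :
    farSum φ f w v = #(farSet f u v) * φ (f w u) + farSum φ f u v := by
  rw [farSum, ← sum_equiv (Equiv.mulLeft (f w u)) (f := fun g => φ (f w u * g))
    (fun _ => (hf.mul_left_mem_farSet_iff huv hwu hwv).symm) fun _ _ => rfl]
  simp [hφ, sum_add_distrib, farSum]

theorem sum_sub_sum_eq (h2 : (2 : K) ≠ 0) (hG : (Fintype.card G : K) = 0) (huv : u ≠ v) :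
    ∑ w, φ (f u w) - ∑ w, φ (f v w) =
      (Fintype.card V + c * #(farSet f u v)) * φ (f u v) - c * farSum φ f u v := by
  have split (F : V → K) : ∑ w ∈ ({u, v} : Finset V)ᶜ, F w = ∑ w, F w - F u - F v := by
    rw [← sum_compl_add_sum {u, v}, sum_pair huv]; ring
  have hdiag (x : V) : φ (f x x) = 0 := by
    have h := map_inv_of_map_mul hφ (f x x)
    rw [← hf.symm] at h
    exact (mul_eq_zero.mp (by linear_combination h : (2 : K) * φ (f x x) = 0)).resolve_left h2
  have hcount := hf.sum_twoPathCount_mul_eq huv fun _ => (1 : K)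
  have hsum := hf.sum_twoPathCount_mul_eq huv φ
  have hpath : ∑ w, φ (f u w * f w v) = ∑ w, φ (f u w) - ∑ w, φ (f v w) := by
    rw [← sum_sub_distrib]
    exact sum_congr rfl fun w _ => by rw [hφ, hf.symm v w, map_inv_of_map_mul hφ, sub_eq_add_neg]
  rw [sum_twoPathCount_mul, split] at hcount hsum
  rw [hpath] at hsum
  simp only [hφ, hdiag, sum_eq_zero_of_map_mul h2 hφ, mul_one, sum_const, card_univ, nsmul_eq_mul,
    hG] at hcount hsum
  rw [farSum]
  linear_combination hsum - φ (f u v) * hcount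

theorem farSum_eq_zero (h2 : (2 : K) ≠ 0)
    (hM : ∀ {a b : V}, a ≠ b → (#(farSet f a b) : K) = 0) (huv : u ≠ v) (hwu : w ≠ u)
    (hwv : w ≠ v) : farSum φ f u v = 0 := by
  have e1 := hf.farSum_left hφ huv hwu hwv
  have e2 := hf.farSum_left hφ hwv.symm huv hwu.symm
  have e3 := hf.farSum_left hφ hwu hwv.symm huv.symm
  rw [hM huv] at e1
  rw [hM hwv.symm] at e2
  rw [hM hwu] at e3
  have hswap := farSum_swap hφ hf.symm
  have h : (2 : K) * farSum φ f u v = 0 := by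
    linear_combination hswap v u - e3 - hswap u w + e2 + hswap w v - e1
  exact (mul_eq_zero.mp h).resolve_left h2

theorem card_farSet_mul_triangle_sum_eq_zero (hV : 4 ≤ Fintype.card V) (huv : u ≠ v)
    (hvw : v ≠ w) (hwu : w ≠ u) :
    (#(farSet f u v) : K) * (φ (f u v) + φ (f v w) + φ (f w u)) = 0 := by
  obtain ⟨x, -, hx⟩ := exists_mem_notMem_of_card_lt_card (s := {u, v, w}) (t := univ)
    (by simpa using card_le_three.trans_lt (by omega))
  simp only [mem_insert, mem_singleton, not_or] at hx
  obtain ⟨hxu, hxv, hxw⟩ := hx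
  have e1 := hf.farSum_left hφ (Ne.symm hxv) huv (Ne.symm hxu)
  have e2 := hf.farSum_left hφ (Ne.symm hxw) hvw (Ne.symm hxv)
  have e3 := hf.farSum_left hφ (Ne.symm hxu) hwu (Ne.symm hxw)
  rw [hf.card_farSet_eq huv (Ne.symm hxv)] at e1
  rw [hf.card_farSet_eq huv (Ne.symm hxw)] at e2
  rw [hf.card_farSet_eq huv (Ne.symm hxu)] at e3
  linear_combination -(e1 + e2 + e3)

theorem natCast_card_mul_triangle_sum_eq_zero (h2 : (2 : K) ≠ 0)
    (hG : (Fintype.card G : K) = 0) (hV : 3 ≤ Fintype.card V)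
    (hM0 : (#(farSet f u v) : K) = 0) (huv : u ≠ v) (hvw : v ≠ w) (hwu : w ≠ u) :
    (Fintype.card V : K) * (φ (f u v) + φ (f v w) + φ (f w u)) = 0 := by
  have hM {a b : V} (hab : a ≠ b) : (#(farSet f a b) : K) = 0 := by
    rw [hf.card_farSet_eq huv hab, hM0]
  have hzero {a b : V} (hab : a ≠ b) : farSum φ f a b = 0 := by
    obtain ⟨x, -, hx⟩ := exists_mem_notMem_of_card_lt_card (s := {a, b}) (t := univ)
      (by simpa using card_le_two.trans_lt (by omega))
    simp only [mem_insert, mem_singleton, not_or] at hx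
    exact hf.farSum_eq_zero hφ h2 hM hab hx.1 hx.2
  have e1 := hf.sum_sub_sum_eq hφ h2 hG huv
  have e2 := hf.sum_sub_sum_eq hφ h2 hG hvw
  have e3 := hf.sum_sub_sum_eq hφ h2 hG hwu
  rw [hzero huv, hM huv] at e1
  rw [hzero hvw, hM hvw] at e2
  rw [hzero hwu, hM hwu] at e3
  linear_combination -e1 - e2 - e3

theorem triangle_sum_eq_zero (h2 : (2 : K) ≠ 0) (hG : (Fintype.card G : K) = 0)
    (hV : 4 ≤ Fintype.card V) (hn : (Fintype.card V : K) ≠ 0)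
    (huv : u ≠ v) (hvw : v ≠ w) (hwu : w ≠ u) : φ (f u v) + φ (f v w) + φ (f w u) = 0 := by
  by_cases hM0 : (#(farSet f u v) : K) = 0
  · exact (mul_eq_zero.mp (hf.natCast_card_mul_triangle_sum_eq_zero hφ h2 hG (by omega) hM0
      huv hvw hwu)).resolve_left hn
  · exact (mul_eq_zero.mp
      (hf.card_farSet_mul_triangle_sum_eq_zero hφ hV huv hvw hwu)).resolve_left hM0

theorem natCast_card_eq_zero (h2 : (2 : K) ≠ 0) (hG : (Fintype.card G : K) = 0)
    (hV : 4 ≤ Fintype.card V) (hφ0 : ∃ g, φ g ≠ 0) : (Fintype.card V : K) = 0 := by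
  by_contra hn
  obtain ⟨g, hg⟩ := hφ0
  have hg1 : g ≠ 1 := by
    rintro rfl
    exact hg (map_one_of_map_mul hφ)
  obtain ⟨u⟩ : Nonempty V := Fintype.card_pos_iff.mp (by omega)
  obtain ⟨w, z, hwu, hzu, hzw, rfl⟩ := hf.exists_triangle u hg1
  rw [hφ, hφ] at hg
  exact hg (hf.triangle_sum_eq_zero hφ h2 hG hV hn hwu.symm hzw.symm hzu)

end AdditiveFunction

end IsDracknArcFunction

end Drackn

namespace Drackn.IsDracknArcFunction

variable {V G : Type*} [CommGroup G] [Fintype V] [DecidableEq V] [Fintype G] [DecidableEq G]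
  {f : V → V → G} {c : ℕ} (hf : IsDracknArcFunction f c) {p : ℕ}
include hf

theorem dvd_card_of_card_lt_four (hp3 : 3 ≤ p) (hpG : p ∣ Fintype.card G)
    (hV : Fintype.card V < 4) : p ∣ Fintype.card V := by
  rcases (Fintype.card V).eq_zero_or_pos with h0 | hpos
  · rw [h0]
    exact dvd_zero p
  obtain ⟨u⟩ := Fintype.card_pos_iff.mp hpos
  have hle := hf.card_group_le u
  have hpG' := Nat.le_of_dvd Fintype.card_pos hpG
  generalize Fintype.card V = n at *
  interval_cases n
  · omega
  · omega
  · obtain rfl : p = 3 := by omega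
    exact dvd_rfl

theorem prime_dvd_card_of_four_le (hp : p.Prime) (hp3 : 3 ≤ p) (hpG : p ∣ Fintype.card G)
    (hV : 4 ≤ Fintype.card V) : p ∣ Fintype.card V := by
  have : Fact p.Prime := ⟨hp⟩
  obtain ⟨φ, hφ0⟩ := exists_addMonoidHom_zmod_ne_zero (A := Additive G) (p := p)
    (by rwa [Nat.card_congr Additive.ofMul.symm, Nat.card_eq_fintype_card])
  have h2 : (2 : ZMod p) ≠ 0 := by
    rw [← Nat.cast_ofNat, Ne, ZMod.natCast_eq_zero_iff]
    exact fun h => by have := Nat.le_of_dvd two_pos h; omega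
  rw [← ZMod.natCast_eq_zero_iff]
  refine hf.natCast_card_eq_zero (φ := fun g => φ (Additive.ofMul g)) (fun a b => map_add φ _ _)
    h2 ((ZMod.natCast_eq_zero_iff _ p).mpr hpG) hV ?_
  obtain ⟨a, ha⟩ := DFunLike.ne_iff.mp hφ0
  exact ⟨a.toMul, ha⟩

theorem prime_dvd_card (hp : p.Prime) (hpodd : Odd p) (hpG : p ∣ Fintype.card G) :
    p ∣ Fintype.card V := by
  have hp3 : 3 ≤ p := by
    obtain ⟨k, rfl⟩ := hpodd
    have := hp.two_le
    omega
  rcases lt_or_ge (Fintype.card V) 4 with hV | hV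
  · exact hf.dvd_card_of_card_lt_four hp3 hpG hV
  · exact hf.prime_dvd_card_of_four_le hp hp3 hpG hV

end Drackn.IsDracknArcFunction

/-- **Odd primes dividing the index of an abelian drackn.** If `X` is an
abelian `(n,r,c)`-drackn (determined by a normalized arc function `f` with
values in an abelian group `G = ⟨f⟩` of order `r`), then every odd prime
dividing `r` also divides `n`. -/
theorem abelian_drackn_odd_prime_dvd (n r c : ℕ)
    (G : Type*) [CommGroup G] [Fintype G] (hG : Fintype.card G = r)
    (f : Fin n → Fin n → G)
    (hsym : ∀ u v, f v u = (f u v)⁻¹)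
    (hX : IsDracknCover
      (SimpleGraph.fromRel
        (fun x y : Fin n × G => x.1 ≠ y.1 ∧ y.2 = x.2 * f x.1 y.1))
      Prod.fst r c)
    (p : ℕ) (hp : p.Prime) (hpodd : Odd p) (hpr : p ∣ r) :
    p ∣ n := by
  classical
  have hf := Drackn.isDracknArcFunction_of_isDracknCover hsym hX
  simpa using hf.prime_dvd_card hp hpodd (hG ▸ hpr)
end

section
/- Let n ≥ 2 and let τ < 0 satisfy the drackn eigenvalue equation. Then the quantity m̄_τ := n/(1 + τ²/(n−1)) is strictly decreasing in |τ|, and m̄_τ ≥ √n if and only if |τ| ≤ (√n − 1)√(√n + 1). Consequently, if an abelian (n,r,c)-drackn with r odd exists (forcing n ≤ m̄_τ² by the complex absolute bound applied to the n lines in dimension m̄_τ), then −(√n − 1)√(√n + 1) ≤ τ. -/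
/-!
`m̄_τ = n / (1 + τ² / (n - 1))` is a decreasing function of `τ²`. Clearing denominators and
dividing by `√n`, the inequality `√n ≤ m̄_τ` becomes `τ² ≤ (√n - 1)(n - 1)`, and the right-hand
side is the square of `(√n - 1)√(√n + 1)` because `n - 1 = (√n - 1)(√n + 1)`. The absolute bound
`n ≤ m̄_τ²` says exactly `√n ≤ m̄_τ`.
-/

open Real

namespace Drackn

/-- The paper's `m̄_τ`, with `N = n` the number of lines. -/
noncomputable def mBar (N τ : ℝ) : ℝ := N / (1 + τ ^ 2 / (N - 1))

noncomputable def tauBound (N : ℝ) : ℝ := (√N - 1) * √(√N + 1)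

variable {N : ℝ}

theorem mBar_lt_mBar_of_abs_lt (hN : 1 < N) {τ₁ τ₂ : ℝ} (h : |τ₁| < |τ₂|) :
    mBar N τ₂ < mBar N τ₁ := by
  have hN1 : 0 < N - 1 := sub_pos.mpr hN
  have hsq : τ₁ ^ 2 < τ₂ ^ 2 := sq_lt_sq.mpr h
  unfold mBar
  gcongr

theorem sqrt_le_mBar_iff (hN : 1 < N) (τ : ℝ) :
    √N ≤ mBar N τ ↔ τ ^ 2 ≤ (√N - 1) * (N - 1) := by
  have hN1 : 0 < N - 1 := sub_pos.mpr hN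
  have hs : 0 < √N := sqrt_pos.mpr (by linarith)
  have hN_eq : N = √N * √N := (mul_self_sqrt (by linarith)).symm
  calc √N ≤ mBar N τ ↔ √N * (1 + τ ^ 2 / (N - 1)) ≤ √N * √N := by
        rw [mBar, le_div_iff₀ (by positivity), ← hN_eq]
    _ ↔ τ ^ 2 / (N - 1) ≤ √N - 1 := by
        rw [mul_le_mul_iff_right₀ hs, le_sub_iff_add_le']
    _ ↔ τ ^ 2 ≤ (√N - 1) * (N - 1) := div_le_iff₀ hN1

theorem tauBound_nonneg (hN : 1 ≤ N) : 0 ≤ tauBound N :=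
  mul_nonneg (sub_nonneg.mpr (one_le_sqrt.mpr hN)) (sqrt_nonneg _)

theorem tauBound_sq (hN : 0 ≤ N) : tauBound N ^ 2 = (√N - 1) * (N - 1) := by
  rw [tauBound, mul_pow, sq_sqrt (by positivity)]
  linear_combination (√N - 1) * sq_sqrt hN

theorem sqrt_le_mBar_iff_abs_le (hN : 1 < N) (τ : ℝ) :
    √N ≤ mBar N τ ↔ |τ| ≤ tauBound N := by
  rw [sqrt_le_mBar_iff hN, ← tauBound_sq (by linarith), sq_le_sq,
    abs_of_nonneg (tauBound_nonneg hN.le)]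

theorem sqrt_le_mBar_of_le_sq (hN : 1 < N) {τ : ℝ} (h : N ≤ mBar N τ ^ 2) :
    √N ≤ mBar N τ := by
  have hN1 : 0 < N - 1 := sub_pos.mpr hN
  exact sqrt_le_iff.mpr ⟨by unfold mBar; positivity, h⟩

end Drackn

open Drackn in
/-- **The bound on `τ` from the complex absolute bound.** For `n ≥ 2`, the
quantity `m̄_τ = n/(1 + τ²/(n-1))` is strictly decreasing in `|τ|`, and
`m̄_τ ≥ √n` iff `|τ| ≤ (√n - 1)√(√n + 1)`.  Consequently, if an abelian
`(n,r,c)`-drackn with `r` odd exists — forcing `n ≤ m̄_τ²` by the complex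
absolute bound applied to the `n` lines in dimension `m̄_τ` — then
`-(√n - 1)√(√n + 1) ≤ τ`. -/
theorem tau_bound_from_absolute_bound (n : ℕ) (hn : 2 ≤ n) :
    (∀ τ₁ τ₂ : ℝ, |τ₁| < |τ₂| →
      (n : ℝ) / (1 + τ₂ ^ 2 / ((n : ℝ) - 1)) <
        (n : ℝ) / (1 + τ₁ ^ 2 / ((n : ℝ) - 1))) ∧
    (∀ τ : ℝ,
      Real.sqrt n ≤ (n : ℝ) / (1 + τ ^ 2 / ((n : ℝ) - 1)) ↔
        |τ| ≤ (Real.sqrt n - 1) * Real.sqrt (Real.sqrt n + 1)) ∧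
    (∀ τ : ℝ, τ < 0 →
      (n : ℝ) ≤ ((n : ℝ) / (1 + τ ^ 2 / ((n : ℝ) - 1))) ^ 2 →
      -((Real.sqrt n - 1) * Real.sqrt (Real.sqrt n + 1)) ≤ τ) := by
  have hN : (1 : ℝ) < n := by exact_mod_cast hn
  refine ⟨fun τ₁ τ₂ => mBar_lt_mBar_of_abs_lt hN, sqrt_le_mBar_iff_abs_le hN, ?_⟩
  intro τ _ h
  exact neg_le_of_abs_le ((sqrt_le_mBar_iff_abs_le hN τ).mp (sqrt_le_mBar_of_le_sq hN h))
end
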